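/- arXiv:2305.04664 — 9 statements merged into one kernel-verified Lean document; each statement's English description precedes it below -/
import Mathlib

section
/- There exist a complex number γ with Im(γ) < 0 and a three times continuously differentiable function W : ℝ → ℂ such that for every z ∈ ℝ one has γ·(γ − z²)²·W'(z) + D³[(γ − z²)·W(z)] = 0, and moreover W(z) → 0 as z → −∞ and W(z) → 1 as z → +∞. -/
/-!
Take for `γ` a primitive cube root of unity with `Im γ < 0` and look for `W` with `W'`
proportional to `V := exp(γ²z²/2) / (γ - z²)²`. Since `(γ - z²)''' = 0`, the equation only
involves `W'`; writing `V' = rV` with `r = γ²z + 4z/(γ - z²)`, it becomes `V` times a rational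
function of `z` that vanishes identically because `γ³ = 1`. The same identity gives
`2V = γ·exp(γ²z²/2) - G'` for `G = -γ²z·exp(γ²z²/2)/(γ - z²)`, which decays at `±∞` because
`Re γ² = -1/2`. Hence `z ↦ γ ∫_{-∞}^z exp(γ²t²/2) dt - G(z)` is a primitive of `2V` running from `0`
to `γ ∫ exp(γ²t²/2)`, a nonzero multiple of a Gaussian integral, and normalizing it gives `W`.
-/

open Filter MeasureTheory Set Topology

noncomputable section

namespace HyperbolicPrandtl

theorem hasDerivAt_ofReal (t : ℝ) : HasDerivAt (fun t : ℝ => (t : ℂ)) 1 t :=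
  (hasDerivAt_id t).ofReal_comp

theorem hasDerivAt_sub_sq (γ : ℂ) (t : ℝ) :
    HasDerivAt (fun t : ℝ => γ - (t : ℂ) ^ 2) (-2 * t) t := by
  simpa using ((hasDerivAt_ofReal t).pow 2).const_sub γ

theorem iteratedDeriv_three_sub_sq_mul (γ : ℂ) {f f' f'' f''' : ℝ → ℂ}
    (hf : ∀ t, HasDerivAt f (f' t) t) (hf' : ∀ t, HasDerivAt f' (f'' t) t)
    (hf'' : ∀ t, HasDerivAt f'' (f''' t) t) (z : ℝ) :
    iteratedDeriv 3 (fun t : ℝ => (γ - (t : ℂ) ^ 2) * f t) z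
      = (γ - (z : ℂ) ^ 2) * f''' z - 6 * z * f'' z - 6 * f' z := by
  have d1 : deriv (fun t : ℝ => (γ - (t : ℂ) ^ 2) * f t)
      = fun t => -2 * t * f t + (γ - (t : ℂ) ^ 2) * f' t :=
    funext fun t => ((hasDerivAt_sub_sq γ t).mul (hf t)).deriv
  have d2 : deriv (fun t : ℝ => -2 * t * f t + (γ - (t : ℂ) ^ 2) * f' t)
      = fun t => -2 * f t - 4 * t * f' t + (γ - (t : ℂ) ^ 2) * f'' t := by
    funext t
    have h : HasDerivAt (fun t : ℝ => -2 * t * f t + (γ - (t : ℂ) ^ 2) * f' t) _ t :=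
      (((hasDerivAt_ofReal t).const_mul (-2)).mul (hf t)).add
        ((hasDerivAt_sub_sq γ t).mul (hf' t))
    rw [h.deriv]
    ring
  have d3 : HasDerivAt (fun t => -2 * f t - 4 * t * f' t + (γ - (t : ℂ) ^ 2) * f'' t) _ z :=
    (((hf z).const_mul (-2)).sub (((hasDerivAt_ofReal z).const_mul 4).mul (hf' z))).add
      ((hasDerivAt_sub_sq γ z).mul (hf'' z))
  rw [iteratedDeriv_succ, iteratedDeriv_succ, iteratedDeriv_one, d1, d2, d3.deriv]
  ring

theorem hasDerivAt_setIntegral_Iic {E : Type*} [NormedAddCommGroup E] [NormedSpace ℝ E]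
    [CompleteSpace E] {f : ℝ → E} (hf : Integrable f) (hc : Continuous f) (z : ℝ) :
    HasDerivAt (fun z => ∫ t in Iic z, f t) (f z) z := by
  have hsplit : (fun z => ∫ t in Iic z, f t)
      = fun z => (∫ t in Iic 0, f t) + ∫ t in 0..z, f t := by
    funext z
    rw [← intervalIntegral.integral_Iic_sub_Iic hf.integrableOn hf.integrableOn,
      add_sub_cancel]
  rw [hsplit]
  exact (intervalIntegral.integral_hasDerivAt_right hf.intervalIntegrable
    hc.aestronglyMeasurable.stronglyMeasurableAtFilter hc.continuousAt).const_add _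

theorem hasDerivAt_cexp_mul_sq (a : ℂ) (t : ℝ) :
    HasDerivAt (fun x : ℝ => Complex.exp (a * (x : ℂ) ^ 2))
      (a * (2 * t) * Complex.exp (a * (t : ℂ) ^ 2)) t := by
  simpa [mul_comm] using (((hasDerivAt_ofReal t).pow 2).const_mul a).cexp

theorem integrable_cexp_mul_sq {a : ℂ} (ha : a.re < 0) :
    Integrable fun x : ℝ => Complex.exp (a * (x : ℂ) ^ 2) := by
  simpa using integrable_cexp_neg_mul_sq (b := -a) (by simpa using ha)

theorem integral_cexp_mul_sq_ne_zero {a : ℂ} (ha : a.re < 0) :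
    ∫ x : ℝ, Complex.exp (a * (x : ℂ) ^ 2) ≠ 0 := by
  have h := integral_gaussian_complex (b := -a) (by simpa using ha)
  simp only [neg_neg] at h
  rw [h, Ne, Complex.cpow_eq_zero_iff, not_and_or]
  left
  exact div_ne_zero (by exact_mod_cast Real.pi_ne_zero) (neg_ne_zero.2 (by rintro rfl; simp at ha))

theorem tendsto_cexp_mul_sq_cocompact {a : ℂ} (ha : a.re < 0) :
    Tendsto (fun x : ℝ => Complex.exp (a * (x : ℂ) ^ 2)) (cocompact ℝ) (𝓝 0) := by
  have hsq : Tendsto (fun x : ℝ => x ^ 2) (cocompact ℝ) atTop := by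
    have := (tendsto_pow_atTop (α := ℝ) two_ne_zero).comp (tendsto_norm_cocompact_atTop (E := ℝ))
    simpa only [Function.comp_def, Real.norm_eq_abs, sq_abs] using this
  rw [Complex.tendsto_exp_nhds_zero_iff]
  simpa [← Complex.ofReal_pow, mul_comm] using hsq.atTop_mul_const_of_neg ha

section CubeRoot

variable {γ : ℂ}

theorem pow_three_eq_one_of_sq_add_add_one (hγ : γ ^ 2 + γ + 1 = 0) : γ ^ 3 = 1 := by
  linear_combination (γ - 1) * hγ

theorem re_eq_and_im_ne_zero_of_sq_add_add_one (hγ : γ ^ 2 + γ + 1 = 0) :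
    γ.re = -1 / 2 ∧ γ.im ≠ 0 := by
  have h_re := congrArg Complex.re hγ
  have h_im := congrArg Complex.im hγ
  simp only [sq, Complex.add_re, Complex.mul_re, Complex.one_re, Complex.zero_re,
    Complex.add_im, Complex.mul_im, Complex.one_im, Complex.zero_im] at h_re h_im
  have hne : γ.im ≠ 0 := by
    intro h
    rw [h] at h_re
    nlinarith [sq_nonneg (γ.re + 1 / 2)]
  refine ⟨?_, hne⟩
  have := (mul_eq_zero.1 (show γ.im * (2 * γ.re + 1) = 0 by linarith)).resolve_left hne
  linarith

theorem sub_sq_ne_zero (h : γ.im ≠ 0) (t : ℝ) : γ - (t : ℂ) ^ 2 ≠ 0 := by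
  intro h0
  apply h
  simpa [← Complex.ofReal_pow] using congrArg Complex.im h0

theorem abs_le_norm_sub_sq (h : γ.re ≤ -1 / 4) (t : ℝ) : |t| ≤ ‖γ - (t : ℂ) ^ 2‖ := by
  have hre : (γ - (t : ℂ) ^ 2).re = γ.re - t ^ 2 := by simp [← Complex.ofReal_pow]
  calc |t| ≤ t ^ 2 + 1 / 4 := by nlinarith [sq_abs t, sq_nonneg (|t| - 1 / 2)]
    _ ≤ |(γ - (t : ℂ) ^ 2).re| := by rw [hre, abs_of_neg (by nlinarith)]; linarith
    _ ≤ ‖γ - (t : ℂ) ^ 2‖ := Complex.abs_re_le_norm _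

theorem re_sq_div_two_neg (hγ : γ ^ 2 + γ + 1 = 0) : (γ ^ 2 / 2).re < 0 := by
  rw [show γ ^ 2 = -γ - 1 by linear_combination hγ]
  norm_num [(re_eq_and_im_ne_zero_of_sq_add_add_one hγ).1]

theorem cube_root_identity (h : γ ^ 3 = 1) (w : ℂ) :
    γ ^ 2 * (γ - w ^ 2) + γ ^ 4 * w ^ 2 * (γ - w ^ 2) + 2 * γ ^ 2 * w ^ 2
      + γ * (γ - w ^ 2) ^ 2 = 2 := by
  linear_combination (2 + γ ^ 2 * w ^ 2 - γ * w ^ 4) * h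

end CubeRoot

def gaussian (γ : ℂ) (t : ℝ) : ℂ := Complex.exp (γ ^ 2 / 2 * (t : ℂ) ^ 2)

def profile (γ : ℂ) (t : ℝ) : ℂ := gaussian γ t / (γ - (t : ℂ) ^ 2) ^ 2

def profileLogDeriv (γ : ℂ) (t : ℝ) : ℂ := γ ^ 2 * t + 4 * t / (γ - (t : ℂ) ^ 2)

def defect (γ : ℂ) (t : ℝ) : ℂ := -γ ^ 2 * t * gaussian γ t / (γ - (t : ℂ) ^ 2)

def solution (γ : ℂ) (z : ℝ) : ℂ :=
  (γ * (∫ t in Iic z, gaussian γ t) - defect γ z) / (γ * ∫ t, gaussian γ t)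

section Solution

variable {γ : ℂ}

theorem hasDerivAt_gaussian (t : ℝ) : HasDerivAt (gaussian γ) (γ ^ 2 * t * gaussian γ t) t := by
  refine (hasDerivAt_cexp_mul_sq (γ ^ 2 / 2) t).congr_deriv ?_
  rw [gaussian]
  ring

theorem contDiff_profile (h : γ.im ≠ 0) {n : WithTop ℕ∞} : ContDiff ℝ n (profile γ) := by
  have hE : ContDiff ℝ n (gaussian γ) :=
    Complex.contDiff_exp.comp (contDiff_const.mul (Complex.ofRealCLM.contDiff.pow 2))
  have hF : ContDiff ℝ n fun t : ℝ => (γ - (t : ℂ) ^ 2) ^ 2 :=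
    (contDiff_const.sub (Complex.ofRealCLM.contDiff.pow 2)).pow 2
  rw [show profile γ = fun t => gaussian γ t * ((γ - (t : ℂ) ^ 2) ^ 2)⁻¹ from
    funext fun t => div_eq_mul_inv _ _]
  exact hE.mul (hF.inv fun t => pow_ne_zero 2 (sub_sq_ne_zero h t))

theorem hasDerivAt_profile (h : γ.im ≠ 0) (t : ℝ) :
    HasDerivAt (profile γ) (profileLogDeriv γ t * profile γ t) t := by
  have hF := sub_sq_ne_zero h t
  refine ((hasDerivAt_gaussian t).div ((hasDerivAt_sub_sq γ t).pow 2)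
    (pow_ne_zero 2 hF)).congr_deriv ?_
  simp only [profile, profileLogDeriv, Pi.pow_apply]
  field_simp
  ring

theorem hasDerivAt_profileLogDeriv (h : γ.im ≠ 0) (t : ℝ) :
    HasDerivAt (profileLogDeriv γ)
      (γ ^ 2 + 4 / (γ - (t : ℂ) ^ 2) + 8 * t ^ 2 / (γ - (t : ℂ) ^ 2) ^ 2) t := by
  have hF := sub_sq_ne_zero h t
  refine (((hasDerivAt_ofReal t).const_mul (γ ^ 2)).add
    (((hasDerivAt_ofReal t).const_mul 4).div (hasDerivAt_sub_sq γ t) hF)).congr_deriv ?_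
  field_simp
  ring

theorem profile_ode (hγ : γ ^ 3 = 1) (h : γ.im ≠ 0) (t : ℝ) :
    (γ - (t : ℂ) ^ 2) * ((γ ^ 2 + 4 / (γ - (t : ℂ) ^ 2) + 8 * t ^ 2 / (γ - (t : ℂ) ^ 2) ^ 2)
        * profile γ t + profileLogDeriv γ t * (profileLogDeriv γ t * profile γ t))
      - 6 * t * (profileLogDeriv γ t * profile γ t) - 6 * profile γ t
      + γ * (γ - (t : ℂ) ^ 2) ^ 2 * profile γ t = 0 := by
  have hF := sub_sq_ne_zero h t
  simp only [profileLogDeriv]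
  field_simp
  linear_combination profile γ t * (γ - (t : ℂ) ^ 2) * cube_root_identity hγ t

theorem hasDerivAt_defect (hγ : γ ^ 2 + γ + 1 = 0) (t : ℝ) :
    HasDerivAt (defect γ) (γ * gaussian γ t - 2 * profile γ t) t := by
  have hF := sub_sq_ne_zero (re_eq_and_im_ne_zero_of_sq_add_add_one hγ).2 t
  refine ((((hasDerivAt_ofReal t).const_mul (-γ ^ 2)).mul (hasDerivAt_gaussian t)).div
    (hasDerivAt_sub_sq γ t) hF).congr_deriv ?_
  simp only [profile, Pi.mul_apply]
  field_simp
  linear_combination (-gaussian γ t) * cube_root_identity (pow_three_eq_one_of_sq_add_add_one hγ) t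

theorem norm_defect_le (hγ : γ ^ 2 + γ + 1 = 0) (t : ℝ) :
    ‖defect γ t‖ ≤ ‖γ ^ 2‖ * ‖gaussian γ t‖ := by
  have hre : γ.re ≤ -1 / 4 := by linarith [(re_eq_and_im_ne_zero_of_sq_add_add_one hγ).1]
  calc ‖defect γ t‖ = ‖γ ^ 2‖ * ‖gaussian γ t‖ * (|t| / ‖γ - (t : ℂ) ^ 2‖) := by
        rw [defect, norm_div, norm_mul, norm_mul, norm_neg, Complex.norm_real, Real.norm_eq_abs]
        ring
    _ ≤ ‖γ ^ 2‖ * ‖gaussian γ t‖ * 1 := by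
        gcongr
        exact div_le_one_of_le₀ (abs_le_norm_sub_sq hre t) (norm_nonneg _)
    _ = ‖γ ^ 2‖ * ‖gaussian γ t‖ := mul_one _

theorem tendsto_defect_cocompact (hγ : γ ^ 2 + γ + 1 = 0) :
    Tendsto (defect γ) (cocompact ℝ) (𝓝 0) := by
  refine squeeze_zero_norm (norm_defect_le hγ) ?_
  simpa only [gaussian, norm_zero, mul_zero] using
    (tendsto_cexp_mul_sq_cocompact (re_sq_div_two_neg hγ)).norm.const_mul ‖γ ^ 2‖

theorem integrable_gaussian (hγ : γ ^ 2 + γ + 1 = 0) : Integrable (gaussian γ) :=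
  integrable_cexp_mul_sq (re_sq_div_two_neg hγ)

theorem mul_integral_gaussian_ne_zero (hγ : γ ^ 2 + γ + 1 = 0) :
    γ * ∫ t, gaussian γ t ≠ 0 := by
  refine mul_ne_zero ?_ (integral_cexp_mul_sq_ne_zero (re_sq_div_two_neg hγ))
  rintro rfl
  norm_num at hγ

theorem hasDerivAt_solution (hγ : γ ^ 2 + γ + 1 = 0) (z : ℝ) :
    HasDerivAt (solution γ) (2 * profile γ z / (γ * ∫ t, gaussian γ t)) z := by
  have hE := hasDerivAt_setIntegral_Iic (integrable_gaussian hγ)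
    (continuous_iff_continuousAt.2 fun t => (hasDerivAt_gaussian t).continuousAt) z
  refine ((hE.const_mul γ).sub (hasDerivAt_defect hγ z)).div_const _ |>.congr_deriv ?_
  ring

theorem contDiff_solution (hγ : γ ^ 2 + γ + 1 = 0) : ContDiff ℝ 3 (solution γ) := by
  rw [show (3 : WithTop ℕ∞) = 2 + 1 from rfl, contDiff_succ_iff_deriv]
  refine ⟨fun z => (hasDerivAt_solution hγ z).differentiableAt, by simp, ?_⟩
  rw [funext fun z => (hasDerivAt_solution hγ z).deriv]
  have him := (re_eq_and_im_ne_zero_of_sq_add_add_one hγ).2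
  exact (contDiff_const.mul (contDiff_profile him)).div_const _

theorem solution_ode (hγ : γ ^ 2 + γ + 1 = 0) (z : ℝ) :
    γ * (γ - (z : ℂ) ^ 2) ^ 2 * deriv (solution γ) z
      + iteratedDeriv 3 (fun t : ℝ => (γ - (t : ℂ) ^ 2) * solution γ t) z = 0 := by
  have him := (re_eq_and_im_ne_zero_of_sq_add_add_one hγ).2
  set c := γ * ∫ t, gaussian γ t
  rw [iteratedDeriv_three_sub_sq_mul γ (hasDerivAt_solution hγ)
    (fun t => ((hasDerivAt_profile him t).const_mul 2).div_const c)
    (fun t => (((hasDerivAt_profileLogDeriv him t).mul (hasDerivAt_profile him t)).const_mul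
      2).div_const c) z, (hasDerivAt_solution hγ z).deriv]
  linear_combination (2 / c) * profile_ode (pow_three_eq_one_of_sq_add_add_one hγ) him z

theorem tendsto_solution_atBot (hγ : γ ^ 2 + γ + 1 = 0) : Tendsto (solution γ) atBot (𝓝 0) := by
  have h := (((tendsto_integral_Iic_zero (f := gaussian γ) (μ := volume) tendsto_id).const_mul
    γ).sub ((tendsto_defect_cocompact hγ).mono_left atBot_le_cocompact)).div_const
    (γ * ∫ t, gaussian γ t)
  rwa [mul_zero, sub_zero, zero_div] at h

theorem tendsto_solution_atTop (hγ : γ ^ 2 + γ + 1 = 0) : Tendsto (solution γ) atTop (𝓝 1) := by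
  have h := ((((aecover_Iic tendsto_id).integral_tendsto_of_countably_generated
    (integrable_gaussian hγ)).const_mul γ).sub
    ((tendsto_defect_cocompact hγ).mono_left atTop_le_cocompact)).div_const
    (γ * ∫ t, gaussian γ t)
  rwa [sub_zero, div_self (mul_integral_gaussian_ne_zero hγ)] at h

end Solution

theorem exists_sq_add_add_one_eq_zero_im_neg : ∃ γ : ℂ, γ ^ 2 + γ + 1 = 0 ∧ γ.im < 0 := by
  have h3 : Real.sqrt 3 ^ 2 = 3 := Real.sq_sqrt (by norm_num)
  refine ⟨⟨-1 / 2, -Real.sqrt 3 / 2⟩, ?_, ?_⟩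
  · apply Complex.ext <;>
      simp only [sq, Complex.add_re, Complex.mul_re, Complex.one_re, Complex.zero_re,
        Complex.add_im, Complex.mul_im, Complex.one_im, Complex.zero_im] <;>
      nlinarith
  · show -Real.sqrt 3 / 2 < 0
    linarith [Real.sqrt_pos.2 (by norm_num : (0 : ℝ) < 3)]

end HyperbolicPrandtl

end

/-- Lemma 1.2 of the paper: the spectral condition for the hyperbolic Prandtl
equations. There exist `γ : ℂ` with negative imaginary part and a three times
continuously differentiable `W : ℝ → ℂ` solving
`γ (γ - z²)² W'(z) + D³[(γ - z²) W(z)] = 0` with `W → 0` at `-∞`, `W → 1` at `+∞`. -/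
theorem stmt0 :
    ∃ (γ : ℂ) (W : ℝ → ℂ), γ.im < 0 ∧ ContDiff ℝ 3 W ∧
      (∀ z : ℝ, γ * (γ - (z : ℂ) ^ 2) ^ 2 * deriv W z
          + iteratedDeriv 3 (fun t : ℝ => (γ - (t : ℂ) ^ 2) * W t) z = 0) ∧
      Tendsto W atBot (nhds 0) ∧ Tendsto W atTop (nhds 1) := by
  obtain ⟨γ, hγ, him⟩ := HyperbolicPrandtl.exists_sq_add_add_one_eq_zero_im_neg
  exact ⟨γ, HyperbolicPrandtl.solution γ, him, HyperbolicPrandtl.contDiff_solution hγ,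
    HyperbolicPrandtl.solution_ode hγ, HyperbolicPrandtl.tendsto_solution_atBot hγ,
    HyperbolicPrandtl.tendsto_solution_atTop hγ⟩
end

section
/- Let γ ∈ ℂ satisfy Im(γ) < 0 and Im(γ²) ≥ 0. Let F : ℝ → ℂ be four times continuously differentiable and suppose there exist constants C > 0 and c > 0 with |F(z)| + |F'(z)| + |F''(z)| + |F'''(z)| ≤ C·e^{−c·z²} for all z ∈ ℝ. If F''''(z) + γ·(γ − z²)·F''(z) + 2γ·F(z) = 0 for every z ∈ ℝ, then F is identically zero. -/
/-!
Multiply the equation by `conj F''` and integrate over `ℝ`. Two integrations by parts give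
`∫ F'''' conj F'' = -∫ |F'''|²` and `∫ F conj F'' = -∫ |F'|²`, hence
`∫ |F'''|² = γ² ∫ |F''|² - γ ∫ z² |F''|² - 2γ ∫ |F'|²`.
Taking imaginary parts, `Im (γ²) ∫ |F''|² - Im γ ∫ z² |F''|² - 2 Im γ ∫ |F'|² = 0`, a sum of three
nonnegative terms, so `Im γ < 0` forces `∫ |F'|² = 0`. Thus `F` is constant, and the Gaussian decay
makes the constant zero.
-/

open MeasureTheory Complex Filter Topology

theorem ContDiff.hasDerivAt_iteratedDeriv {𝕜 E : Type*} [NontriviallyNormedField 𝕜]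
    [NormedAddCommGroup E] [NormedSpace 𝕜 E] {f : 𝕜 → E} {n : WithTop ℕ∞} (hf : ContDiff 𝕜 n f)
    {k : ℕ} (hk : k < n) (x : 𝕜) :
    HasDerivAt (iteratedDeriv k f) (iteratedDeriv (k + 1) f x) x := by
  rw [iteratedDeriv_succ]
  exact (hf.differentiable_iteratedDeriv k hk x).hasDerivAt

section GaussianDecay

variable {C c : ℝ}

theorem integrable_of_norm_le_mul_exp_neg_mul_sq {E : Type*} [NormedAddCommGroup E] {u : ℝ → E}
    (hu : AEStronglyMeasurable u) (hc : 0 < c) (h : ∀ z, ‖u z‖ ≤ C * Real.exp (-c * z ^ 2)) :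
    Integrable u :=
  ((integrable_exp_neg_mul_sq hc).const_mul C).mono' hu (ae_of_all _ h)

theorem tendsto_atTop_zero_of_norm_le_mul_exp_neg_mul_sq {E : Type*} [NormedAddCommGroup E]
    {u : ℝ → E} (hc : 0 < c) (h : ∀ z, ‖u z‖ ≤ C * Real.exp (-c * z ^ 2)) :
    Tendsto u atTop (𝓝 0) := by
  refine squeeze_zero_norm h ?_
  have hexp : Tendsto (fun z : ℝ => Real.exp (-c * z ^ 2)) atTop (𝓝 0) :=
    Real.tendsto_exp_atBot.comp <| (tendsto_pow_atTop two_ne_zero).const_mul_atTop_of_neg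
      (neg_lt_zero.2 hc)
  simpa using hexp.const_mul C

variable {u v : ℝ → ℂ}

theorem norm_mul_star_le_mul_exp_neg_mul_sq (hu : ∀ z, ‖u z‖ ≤ C * Real.exp (-c * z ^ 2))
    (hv : ∀ z, ‖v z‖ ≤ C * Real.exp (-c * z ^ 2)) (z : ℝ) :
    ‖u z * star (v z)‖ ≤ C ^ 2 * Real.exp (-(2 * c) * z ^ 2) := by
  rw [norm_mul, norm_star]
  calc ‖u z‖ * ‖v z‖ ≤ (C * Real.exp (-c * z ^ 2)) * (C * Real.exp (-c * z ^ 2)) :=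
        mul_le_mul (hu z) (hv z) (norm_nonneg _) ((norm_nonneg _).trans (hu z))
    _ = C ^ 2 * Real.exp (-(2 * c) * z ^ 2) := by
        rw [mul_mul_mul_comm, ← Real.exp_add]; ring_nf

theorem integrable_mul_star_of_norm_le (hu : Continuous u) (hv : Continuous v) (hc : 0 < c)
    (hub : ∀ z, ‖u z‖ ≤ C * Real.exp (-c * z ^ 2)) (hvb : ∀ z, ‖v z‖ ≤ C * Real.exp (-c * z ^ 2)) :
    Integrable fun z => u z * star (v z) :=
  integrable_of_norm_le_mul_exp_neg_mul_sq (hu.mul hv.star).aestronglyMeasurable (by positivity)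
    (norm_mul_star_le_mul_exp_neg_mul_sq hub hvb)

theorem integrable_pow_mul_norm_sq_of_norm_le (hu : Continuous u) (hc : 0 < c)
    (hub : ∀ z, ‖u z‖ ≤ C * Real.exp (-c * z ^ 2)) (n : ℕ) :
    Integrable fun z : ℝ => z ^ n * ‖u z‖ ^ 2 := by
  have hmom : Integrable fun z : ℝ => z ^ n * Real.exp (-(2 * c) * z ^ 2) := by
    simpa [Real.rpow_natCast] using
      integrable_rpow_mul_exp_neg_mul_sq (by positivity : 0 < 2 * c)
        (by linarith [n.cast_nonneg (α := ℝ)] : (-1 : ℝ) < n)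
  refine (hmom.norm.const_mul (C ^ 2)).mono' (by fun_prop) (ae_of_all _ fun z => ?_)
  have hsq : ‖u z‖ ^ 2 ≤ C ^ 2 * Real.exp (-(2 * c) * z ^ 2) := by
    simpa [sq] using norm_mul_star_le_mul_exp_neg_mul_sq hub hub z
  rw [norm_mul, norm_mul, Real.norm_of_nonneg (sq_nonneg ‖u z‖),
    Real.norm_of_nonneg (Real.exp_pos _).le, mul_left_comm]
  exact mul_le_mul_of_nonneg_left hsq (norm_nonneg _)

end GaussianDecay

theorem integral_mul_star_self (u : ℝ → ℂ) :
    ∫ z, u z * star (u z) = ((∫ z, ‖u z‖ ^ 2 : ℝ) : ℂ) := by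
  simp_rw [← starRingEnd_apply, mul_conj']
  exact_mod_cast integral_complex_ofReal

theorem Continuous.eq_zero_of_integral_norm_sq_eq_zero {u : ℝ → ℂ} (hu : Continuous u)
    (hi : Integrable fun z => ‖u z‖ ^ 2) (h : ∫ z, ‖u z‖ ^ 2 = 0) : u = 0 := by
  have hae := (integral_eq_zero_iff_of_nonneg (fun z => by positivity) hi).1 h
  have hzero := ((hu.norm.pow 2).ae_eq_iff_eq volume (continuous_const (y := (0 : ℝ)))).1 hae
  funext z
  simpa using congrFun hzero z

theorem eq_zero_of_ofReal_eq_sq_mul_sub {γ : ℂ} (hγ : γ.im < 0) (hγ2 : 0 ≤ (γ ^ 2).im)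
    {H A B P : ℝ} (hA : 0 ≤ A) (hB : 0 ≤ B) (hP : 0 ≤ P)
    (h : (H : ℂ) = γ ^ 2 * A - γ * B - 2 * γ * P) : P = 0 := by
  have him := congrArg im h
  simp only [ofReal_im, sub_im, mul_im, ofReal_re, mul_zero, add_zero, re_ofNat, im_ofNat,
    zero_mul] at him
  nlinarith [mul_nonneg hγ2 hA, mul_nonneg (neg_nonneg.2 hγ.le) hB]

section EnergyIdentity

variable {γ : ℂ} {C c : ℝ} {F F₁ F₂ F₃ F₄ : ℝ → ℂ}

theorem integral_norm_sq_eq_of_ode (hc : 0 < c) (hF : ∀ x, HasDerivAt F (F₁ x) x)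
    (hF₁ : ∀ x, HasDerivAt F₁ (F₂ x) x) (hF₂ : ∀ x, HasDerivAt F₂ (F₃ x) x)
    (hF₃ : ∀ x, HasDerivAt F₃ (F₄ x) x)
    (hb₀ : ∀ z, ‖F z‖ ≤ C * Real.exp (-c * z ^ 2)) (hb₁ : ∀ z, ‖F₁ z‖ ≤ C * Real.exp (-c * z ^ 2))
    (hb₂ : ∀ z, ‖F₂ z‖ ≤ C * Real.exp (-c * z ^ 2)) (hb₃ : ∀ z, ‖F₃ z‖ ≤ C * Real.exp (-c * z ^ 2))
    (heq : ∀ z : ℝ, F₄ z + γ * (γ - (z : ℂ) ^ 2) * F₂ z + 2 * γ * F z = 0) :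
    ((∫ z, ‖F₃ z‖ ^ 2 : ℝ) : ℂ) = γ ^ 2 * (∫ z, ‖F₂ z‖ ^ 2 : ℝ)
      - γ * (∫ z, z ^ 2 * ‖F₂ z‖ ^ 2 : ℝ) - 2 * γ * (∫ z, ‖F₁ z‖ ^ 2 : ℝ) := by
  have cont {u u' : ℝ → ℂ} (h : ∀ x, HasDerivAt u (u' x) x) : Continuous u :=
    continuous_iff_continuousAt.2 fun x => (h x).continuousAt
  have int {u v u' v' : ℝ → ℂ} (hu : ∀ x, HasDerivAt u (u' x) x)
      (hv : ∀ x, HasDerivAt v (v' x) x) (hub : ∀ z, ‖u z‖ ≤ C * Real.exp (-c * z ^ 2))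
      (hvb : ∀ z, ‖v z‖ ≤ C * Real.exp (-c * z ^ 2)) :
      Integrable fun z => u z * star (v z) :=
    integrable_mul_star_of_norm_le (cont hu) (cont hv) hc hub hvb
  have hFF₂ := int hF hF₂ hb₀ hb₂
  have hA : Integrable fun z => -γ ^ 2 * ((‖F₂ z‖ ^ 2 : ℝ) : ℂ) := by
    simpa using (integrable_pow_mul_norm_sq_of_norm_le (cont hF₂) hc hb₂ 0).ofReal.const_mul
      (-γ ^ 2)
  have hB : Integrable fun z => γ * ((z ^ 2 * ‖F₂ z‖ ^ 2 : ℝ) : ℂ) :=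
    (integrable_pow_mul_norm_sq_of_norm_le (cont hF₂) hc hb₂ 2).ofReal.const_mul _
  have hAB : Integrable fun z => -γ ^ 2 * ((‖F₂ z‖ ^ 2 : ℝ) : ℂ)
      + γ * ((z ^ 2 * ‖F₂ z‖ ^ 2 : ℝ) : ℂ) := hA.add hB
  have pointwise z : F₄ z * star (F₂ z) = -γ ^ 2 * ((‖F₂ z‖ ^ 2 : ℝ) : ℂ)
      + γ * ((z ^ 2 * ‖F₂ z‖ ^ 2 : ℝ) : ℂ) - 2 * γ * (F z * star (F₂ z)) := by
    have hnorm : F₂ z * star (F₂ z) = ((‖F₂ z‖ ^ 2 : ℝ) : ℂ) := by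
      rw [← starRingEnd_apply, mul_conj']; push_cast; rfl
    push_cast at hnorm ⊢
    linear_combination star (F₂ z) * heq z - (γ * (γ - (z : ℂ) ^ 2)) * hnorm
  have hF₄F₂ : Integrable fun z => F₄ z * star (F₂ z) := by
    simp_rw [pointwise]
    exact hAB.sub (hFF₂.const_mul _)
  have ibp₁ : ∫ z, F z * star (F₂ z) = -((∫ z, ‖F₁ z‖ ^ 2 : ℝ) : ℂ) := by
    rw [integral_mul_deriv_eq_deriv_mul_of_integrable (fun x _ => hF x)
      (fun x _ => (hF₁ x).star) hFF₂ (int hF₁ hF₁ hb₁ hb₁) (int hF hF₁ hb₀ hb₁),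
      integral_mul_star_self]
  have ibp₂ : ((∫ z, ‖F₃ z‖ ^ 2 : ℝ) : ℂ) = -∫ z, F₄ z * star (F₂ z) := by
    rw [← integral_mul_star_self, integral_mul_deriv_eq_deriv_mul_of_integrable
      (fun x _ => hF₃ x) (fun x _ => (hF₂ x).star) (int hF₃ hF₃ hb₃ hb₃) hF₄F₂
      (int hF₃ hF₂ hb₃ hb₂)]
  rw [ibp₂, integral_congr_ae (ae_of_all _ pointwise), integral_sub hAB (hFF₂.const_mul _),
    integral_add hA hB, integral_const_mul, integral_const_mul, integral_const_mul,
    integral_complex_ofReal, integral_complex_ofReal, ibp₁]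
  ring

theorem eq_zero_of_hasDerivAt_of_ode (hγ : γ.im < 0) (hγ2 : 0 ≤ (γ ^ 2).im) (hc : 0 < c)
    (hF : ∀ x, HasDerivAt F (F₁ x) x) (hF₁ : ∀ x, HasDerivAt F₁ (F₂ x) x)
    (hF₂ : ∀ x, HasDerivAt F₂ (F₃ x) x) (hF₃ : ∀ x, HasDerivAt F₃ (F₄ x) x)
    (hbound : ∀ z, ‖F z‖ + ‖F₁ z‖ + ‖F₂ z‖ + ‖F₃ z‖ ≤ C * Real.exp (-c * z ^ 2))
    (heq : ∀ z : ℝ, F₄ z + γ * (γ - (z : ℂ) ^ 2) * F₂ z + 2 * γ * F z = 0) :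
    F₁ = 0 := by
  have hb₀ z : ‖F z‖ ≤ C * Real.exp (-c * z ^ 2) := by
    linarith [hbound z, norm_nonneg (F₁ z), norm_nonneg (F₂ z), norm_nonneg (F₃ z)]
  have hb₁ z : ‖F₁ z‖ ≤ C * Real.exp (-c * z ^ 2) := by
    linarith [hbound z, norm_nonneg (F z), norm_nonneg (F₂ z), norm_nonneg (F₃ z)]
  have hb₂ z : ‖F₂ z‖ ≤ C * Real.exp (-c * z ^ 2) := by
    linarith [hbound z, norm_nonneg (F z), norm_nonneg (F₁ z), norm_nonneg (F₃ z)]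
  have hb₃ z : ‖F₃ z‖ ≤ C * Real.exp (-c * z ^ 2) := by
    linarith [hbound z, norm_nonneg (F z), norm_nonneg (F₁ z), norm_nonneg (F₂ z)]
  have hF₁c : Continuous F₁ := continuous_iff_continuousAt.2 fun x => (hF₁ x).continuousAt
  have hP : ∫ z, ‖F₁ z‖ ^ 2 = 0 :=
    eq_zero_of_ofReal_eq_sq_mul_sub hγ hγ2 (integral_nonneg fun z => by positivity)
      (integral_nonneg fun z => by positivity) (integral_nonneg fun z => by positivity)
      (integral_norm_sq_eq_of_ode hc hF hF₁ hF₂ hF₃ hb₀ hb₁ hb₂ hb₃ heq)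
  exact hF₁c.eq_zero_of_integral_norm_sq_eq_zero
    (by simpa using integrable_pow_mul_norm_sq_of_norm_le hF₁c hc hb₁ 0) hP

end EnergyIdentity

theorem stmt4_general (γ : ℂ) (hγ : γ.im < 0) (hγ2 : 0 ≤ (γ ^ 2).im)
    (F : ℝ → ℂ) (hF : ContDiff ℝ 4 F)
    (C c : ℝ) (hc : 0 < c)
    (hbound : ∀ z : ℝ,
      ‖F z‖ + ‖deriv F z‖ + ‖iteratedDeriv 2 F z‖ + ‖iteratedDeriv 3 F z‖
        ≤ C * Real.exp (-c * z ^ 2))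
    (heq : ∀ z : ℝ,
      iteratedDeriv 4 F z + γ * (γ - (z : ℂ) ^ 2) * iteratedDeriv 2 F z
        + 2 * γ * F z = 0) :
    ∀ z : ℝ, F z = 0 := by
  have hd (k : ℕ) (hk : k < 4) := hF.hasDerivAt_iteratedDeriv (k := k) (by exact_mod_cast hk)
  have hdF : Differentiable ℝ F := hF.differentiable (by norm_num)
  have hF' : deriv F = 0 := eq_zero_of_hasDerivAt_of_ode hγ hγ2 hc (fun x => (hdF x).hasDerivAt)
    (by simpa only [iteratedDeriv_one] using hd 1 (by norm_num)) (hd 2 (by norm_num))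
    (hd 3 (by norm_num)) hbound heq
  intro z
  have hconst : ∀ x, F z = F x := fun x => is_const_of_deriv_eq_zero hdF (congrFun hF') z x
  refine tendsto_nhds_unique (l := atTop) (tendsto_const_nhds.congr (f₂ := F) hconst) ?_
  exact tendsto_atTop_zero_of_norm_le_mul_exp_neg_mul_sq (C := C) hc fun x => by
    linarith [hbound x, norm_nonneg (deriv F x), norm_nonneg (iteratedDeriv 2 F x),
      norm_nonneg (iteratedDeriv 3 F x)]

/-- The vanishing lemma of Section 3.1 of the paper: if `Im γ < 0`,
`Im (γ²) ≥ 0`, and `F : ℝ → ℂ` is `C⁴` with Gaussian decay of `F, F', F'', F'''`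
and solves `F'''' + γ (γ - z²) F'' + 2γ F = 0`, then `F ≡ 0`. -/
theorem stmt4 (γ : ℂ) (hγ : γ.im < 0) (hγ2 : 0 ≤ (γ ^ 2).im)
    (F : ℝ → ℂ) (hF : ContDiff ℝ 4 F)
    (C c : ℝ) (hC : 0 < C) (hc : 0 < c)
    (hbound : ∀ z : ℝ,
      ‖F z‖ + ‖deriv F z‖ + ‖iteratedDeriv 2 F z‖ + ‖iteratedDeriv 3 F z‖
        ≤ C * Real.exp (-c * z ^ 2))
    (heq : ∀ z : ℝ,
      iteratedDeriv 4 F z + γ * (γ - (z : ℂ) ^ 2) * iteratedDeriv 2 F z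
        + 2 * γ * F z = 0) :
    ∀ z : ℝ, F z = 0 :=
  stmt4_general γ hγ hγ2 F hF C c hc hbound heq
end

section
/- Let γ ∈ ℂ with γ ∉ ℝ, and let X : ℝ → ℂ be twice continuously differentiable, satisfy |X(z)| + |X'(z)| + |X''(z)| ≤ C·e^{−c·z²} for all z ∈ ℝ and some constants C, c > 0, satisfy γ·(z² − γ)²·X(z) = (z² − γ)·X''(z) + 6z·X'(z) + 6·X(z) for every z ∈ ℝ, and suppose I := ∫_ℝ X(s) ds ≠ 0. Define W(z) := (∫_{−∞}^z X(s) ds)/I. Then W is three times continuously differentiable, satisfies γ·(γ − z²)²·W'(z) + D³[(γ − z²)·W(z)] = 0 for every z ∈ ℝ, and W(z) → 0 as z → −∞ and W(z) → 1 as z → +∞. -/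
/-!
The Gaussian bound makes `X` integrable, so by the fundamental theorem of calculus `W' = X / I`
and `W` is one degree smoother than `X`. By the Leibniz rule,
`D³[(γ - z²) W] = -6 W' - 6 z W'' + (γ - z²) W'''`, and with `W^(k+1) = X^(k) / I` the equation
for `W` is the equation for `X` divided by `I`. The limits are those of `∫_{-∞}^z X` at `∓∞`,
namely `0` and `I`.
-/

open Filter MeasureTheory Set Topology

section CumulativeIntegral

variable {E : Type*} [NormedAddCommGroup E] {f : ℝ → E}

theorem integrable_of_norm_le_mul_exp_neg_mul_sq_s6 {C c : ℝ} (hc : 0 < c)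
    (hf : AEStronglyMeasurable f) (hle : ∀ z, ‖f z‖ ≤ C * Real.exp (-c * z ^ 2)) :
    Integrable f :=
  ((integrable_exp_neg_mul_sq hc).const_mul C).mono' hf (.of_forall hle)

variable [NormedSpace ℝ E]

theorem tendsto_integral_Iic_atTop (hf : Integrable f) :
    Tendsto (fun z => ∫ s in Iic z, f s) atTop (𝓝 (∫ s, f s)) := by
  have htail :=
    (tendsto_integral_Ioi_zero (μ := volume) (f := f) tendsto_id).const_sub (∫ s, f s)
  rw [sub_zero] at htail
  refine htail.congr fun z => ?_
  rw [← intervalIntegral.integral_Iic_add_Ioi hf.integrableOn hf.integrableOn,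
    add_sub_cancel_right]
  rfl

theorem hasDerivAt_integral_Iic [CompleteSpace E] (hf : Integrable f) (hcont : Continuous f)
    (x : ℝ) :
    HasDerivAt (fun z => ∫ s in Iic z, f s) (f x) x := by
  have hsplit : (fun z => ∫ s in Iic z, f s)
      = fun z => (∫ s in Iic 0, f s) + ∫ s in (0 : ℝ)..z, f s := by
    ext z
    rw [← intervalIntegral.integral_Iic_sub_Iic hf.integrableOn hf.integrableOn, add_sub_cancel]
  rw [hsplit]
  exact (intervalIntegral.integral_hasDerivAt_right hf.intervalIntegrable
    (hcont.stronglyMeasurableAtFilter _ _) hcont.continuousAt).const_add _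

end CumulativeIntegral

theorem deriv_ofReal_sq : deriv (fun t : ℝ => (t : ℂ) ^ 2) = fun t : ℝ => 2 * (t : ℂ) := by
  ext t
  simpa using ((hasDerivAt_pow 2 (t : ℂ)).comp_ofReal).deriv

theorem deriv_ofReal : deriv (Complex.ofReal : ℝ → ℂ) = fun _ => 1 := by
  ext t
  simpa using (hasDerivAt_id t).ofReal_comp.deriv

theorem iteratedDeriv_three_sub_sq_mul (γ : ℂ) {W : ℝ → ℂ} (hW : ContDiff ℝ 3 W) (z : ℝ) :
    iteratedDeriv 3 (fun t : ℝ => (γ - (t : ℂ) ^ 2) * W t) z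
      = -6 * deriv W z - 6 * z * iteratedDeriv 2 W z + (γ - z ^ 2) * iteratedDeriv 3 W z := by
  have hp : ContDiff ℝ 3 (fun t : ℝ => γ - (t : ℂ) ^ 2) :=
    contDiff_const.sub (Complex.ofRealCLM.contDiff.pow 2)
  rw [iteratedDeriv_fun_mul hp.contDiffAt hW.contDiffAt]
  simp only [Nat.reduceAdd, Finset.sum_range_succ, Finset.range_one, Finset.sum_singleton,
    Nat.choose_zero_right, Nat.cast_one, iteratedDeriv_zero, one_mul, tsub_zero,
    iteratedDeriv_succ', Nat.choose_one_right, Nat.cast_ofNat, deriv_const_sub', deriv_ofReal_sq,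
    iteratedDeriv_fun_neg, iteratedDeriv_const_mul_field, mul_neg, Nat.add_one_sub_one, neg_mul,
    Nat.choose_succ_self_right, deriv_ofReal, mul_one, Nat.reduceSub, Nat.choose_self,
    deriv_const', iteratedDeriv_fun_const_zero, mul_zero, neg_zero, tsub_self, zero_mul, add_zero]
  ring

theorem stmt6_general (γ : ℂ)
    (X : ℝ → ℂ) (hX : ContDiff ℝ 2 X)
    (C c : ℝ) (hc : 0 < c)
    (hbound : ∀ z : ℝ,
      ‖X z‖ + ‖deriv X z‖ + ‖iteratedDeriv 2 X z‖ ≤ C * Real.exp (-c * z ^ 2))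
    (heq : ∀ z : ℝ,
      γ * ((z : ℂ) ^ 2 - γ) ^ 2 * X z
        = ((z : ℂ) ^ 2 - γ) * iteratedDeriv 2 X z + 6 * (z : ℂ) * deriv X z
          + 6 * X z)
    (hI : (∫ s : ℝ, X s) ≠ 0)
    (W : ℝ → ℂ)
    (hW : W = fun z : ℝ => (∫ s in Set.Iic z, X s) / (∫ s : ℝ, X s)) :
    ContDiff ℝ 3 W ∧
    (∀ z : ℝ, γ * (γ - (z : ℂ) ^ 2) ^ 2 * deriv W z
        + iteratedDeriv 3 (fun t : ℝ => (γ - (t : ℂ) ^ 2) * W t) z = 0) ∧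
    Tendsto W atBot (nhds 0) ∧ Tendsto W atTop (nhds 1) := by
  set I := ∫ s : ℝ, X s
  have hint : Integrable X :=
    integrable_of_norm_le_mul_exp_neg_mul_sq_s6 (C := C) hc hX.continuous.aestronglyMeasurable
      fun z => by linarith [hbound z, norm_nonneg (deriv X z), norm_nonneg (iteratedDeriv 2 X z)]
  have hasDerivAt_W (z : ℝ) : HasDerivAt W (X z / I) z := by
    rw [hW]
    exact (hasDerivAt_integral_Iic hint hX.continuous z).div_const I
  have deriv_W : deriv W = fun z => X z / I := funext fun z => (hasDerivAt_W z).deriv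
  have iteratedDeriv_succ_W (n : ℕ) (z : ℝ) :
      iteratedDeriv (n + 1) W z = iteratedDeriv n X z / I := by
    rw [iteratedDeriv_succ', deriv_W, iteratedDeriv_div_const]
  have hW3 : ContDiff ℝ 3 W := by
    rw [show (3 : WithTop ℕ∞) = 2 + 1 by norm_num, contDiff_succ_iff_deriv, deriv_W]
    exact ⟨fun z => (hasDerivAt_W z).differentiableAt, by simp, hX.div_const I⟩
  refine ⟨hW3, fun z => ?_, ?_, ?_⟩
  · rw [iteratedDeriv_three_sub_sq_mul γ hW3, deriv_W, iteratedDeriv_succ_W 1,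
      iteratedDeriv_succ_W 2, iteratedDeriv_one]
    linear_combination heq z / I
  · rw [hW]
    simpa using (tendsto_integral_Iic_zero tendsto_id).div_const I
  · rw [hW, ← div_self hI]
    exact (tendsto_integral_Iic_atTop hint).div_const I

/-- The construction (3.9) of the paper: from the transformed eigenfunction `X`
with nonzero average, the profile `W(z) = (∫_{-∞}^z X)/(∫_ℝ X)` is `C³`, solves
`γ (γ - z²)² W' + D³[(γ - z²) W] = 0`, and tends to `0` at `-∞`, `1` at `+∞`. -/
theorem stmt6 (γ : ℂ) (hγ : γ.im ≠ 0)
    (X : ℝ → ℂ) (hX : ContDiff ℝ 2 X)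
    (C c : ℝ) (hC : 0 < C) (hc : 0 < c)
    (hbound : ∀ z : ℝ,
      ‖X z‖ + ‖deriv X z‖ + ‖iteratedDeriv 2 X z‖ ≤ C * Real.exp (-c * z ^ 2))
    (heq : ∀ z : ℝ,
      γ * ((z : ℂ) ^ 2 - γ) ^ 2 * X z
        = ((z : ℂ) ^ 2 - γ) * iteratedDeriv 2 X z + 6 * (z : ℂ) * deriv X z
          + 6 * X z)
    (hI : (∫ s : ℝ, X s) ≠ 0)
    (W : ℝ → ℂ)
    (hW : W = fun z : ℝ => (∫ s in Set.Iic z, X s) / (∫ s : ℝ, X s)) :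
    ContDiff ℝ 3 W ∧
    (∀ z : ℝ, γ * (γ - (z : ℂ) ^ 2) ^ 2 * deriv W z
        + iteratedDeriv 3 (fun t : ℝ => (γ - (t : ℂ) ^ 2) * W t) z = 0) ∧
    Tendsto W atBot (nhds 0) ∧ Tendsto W atTop (nhds 1) :=
  stmt6_general γ X hX C c hc hbound heq hI W hW
end

section
/- Let a > 0, let U_s : (0, ∞) → ℝ be three times continuously differentiable, suppose U_s(a) = U_s'(a) = 0, and set b := U_s''(a). Let τ ∈ ℂ, ε > 0, and let V : ℝ → ℂ be three times continuously differentiable on ℝ ∖ {0} and satisfy τ·[(τ + b·z²/2)·V'(z) − b·z·V(z)] + V'''(z) = 0 for every z ≠ 0. Define 𝕍_ε(y) := (U_s(y) + ε^{2/3}·τ)·H(y − a) + ε^{2/3}·V((y − a)/ε^{1/3}) for y > 0, and for y > 0 with y ≠ a define, writing z := (y − a)/ε^{1/3}, ℛ_ε(y) := ε·[ iτ·( (ε^{−2/3}·U_s(y) − (b/2)·z²)·V'(z) − (ε^{−1/3}·U_s'(y) − b·z)·V(z) ) + ε^{1/3}·( τ·V'(z) + ε^{−2/3}·U_s(y)·V'(z)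 − ε^{−1/3}·U_s'(y)·V(z) ) + i·ε^{1/3}·H(y − a)·U_s'''(y) ]. Then for every y > 0 with y ≠ a, the function 𝕍_ε is three times differentiable at y and (iτ + ε^{1/3})·[ (ε^{2/3}·τ + U_s(y))·𝕍_ε'(y) − U_s'(y)·𝕍_ε(y) ] + i·ε^{4/3}·𝕍_ε'''(y) = ℛ_ε(y). -/
/-!
Away from `y = a` the Heaviside factor is locally constant, so near `y` the Ansatz is the smooth
function `t ↦ (U_s(t) + ε^{2/3} τ) H(y - a) + ε^{2/3} V((t - a)/ε^{1/3})`, whose derivatives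
are those of `U_s` plus rescaled derivatives of `V`. Substituting them, the left-hand side
minus `ℛ_ε(y)` collapses to `iε` times the inner equation for `V` at `z = (y - a)/ε^{1/3}`,
which vanishes.
-/

/-- The Heaviside function with `H(z) = 1` for `z > 0` and `H(z) = 0` for `z ≤ 0`,
viewed as a complex-valued function. -/
noncomputable def Heav (z : ℝ) : ℂ := if 0 < z then 1 else 0

open Topology

lemma Heav_eventuallyEq_const {z : ℝ} (hz : z ≠ 0) : Heav =ᶠ[𝓝 z] fun _ ↦ Heav z := by
  rcases hz.lt_or_gt with hneg | hpos
  · filter_upwards [eventually_lt_nhds hneg] with x hx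
    simp [Heav, hx.not_gt, hneg.not_gt]
  · filter_upwards [eventually_gt_nhds hpos] with x hx
    simp [Heav, hx, hpos]

lemma Heav_comp_sub_eventuallyEq_const {a y : ℝ} (hy : y ≠ a) :
    (fun t ↦ Heav (t - a)) =ᶠ[𝓝 y] fun _ ↦ Heav (y - a) :=
  ((continuous_sub_right a).tendsto y).eventually (Heav_eventuallyEq_const (sub_ne_zero.mpr hy))

lemma Real.rpow_natCast_div_three {ε : ℝ} (hε : 0 ≤ ε) (k : ℕ) :
    ε ^ ((k : ℝ) / 3) = (ε ^ ((1 : ℝ) / 3)) ^ k := by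
  rw [← Real.rpow_natCast, ← Real.rpow_mul hε, one_div_mul_eq_div]

lemma ContDiffAt.ofReal_comp {u : ℝ → ℝ} {x : ℝ} {n : WithTop ℕ∞}
    (hu : ContDiffAt ℝ n u x) : ContDiffAt ℝ n (fun t ↦ (u t : ℂ)) x :=
  Complex.ofRealCLM.contDiff.contDiffAt.comp x hu

lemma iteratedDeriv_ofReal_comp {u : ℝ → ℝ} {x : ℝ} {n : ℕ} (hu : ContDiffAt ℝ n u x) :
    iteratedDeriv n (fun t ↦ (u t : ℂ)) x = iteratedDeriv n u x := by
  simp only [iteratedDeriv_eq_iteratedFDeriv]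
  rw [show (fun t ↦ (u t : ℂ)) = Complex.ofRealCLM ∘ u from rfl,
    Complex.ofRealCLM.iteratedFDeriv_comp_left hu le_rfl]
  simp

-- Stated on `{0}ᶜ`, a domain invariant under nonzero dilations, as the scaling lemma requires.
lemma iteratedDeriv_comp_sub_div {𝕜 F : Type*} [NontriviallyNormedField 𝕜]
    [NormedAddCommGroup F] [NormedSpace 𝕜 F] {f : 𝕜 → F} {n : ℕ}
    (hf : ContDiffOn 𝕜 n f {0}ᶜ) {a s x : 𝕜} (hs : s ≠ 0) (hx : x ≠ a) :
    iteratedDeriv n (fun t ↦ f ((t - a) / s)) x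
      = s⁻¹ ^ n • iteratedDeriv n f ((x - a) / s) := by
  have hopen : IsOpen ({0}ᶜ : Set 𝕜) := isOpen_compl_singleton
  have hxa : x - a ∈ ({0}ᶜ : Set 𝕜) := sub_ne_zero.mpr hx
  have hscale := iteratedDerivWithin_comp_const_smul hxa hopen.uniqueDiffOn hf s⁻¹
    (fun w hw ↦ mul_ne_zero (inv_ne_zero hs) hw)
  rw [iteratedDerivWithin_of_isOpen hopen hxa,
    iteratedDerivWithin_of_isOpen hopen (mul_ne_zero (inv_ne_zero hs) hxa)] at hscale
  simp only [div_eq_inv_mul]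
  rw [iteratedDeriv_comp_sub_const n (fun w ↦ f (s⁻¹ * w)) a]
  exact hscale

section BoundaryLayer

variable {u : ℝ → ℝ} {v : ℝ → ℂ} {a s y : ℝ}

lemma contDiffAt_comp_sub_div {n : WithTop ℕ∞} (hv : ContDiffOn ℝ n v {0}ᶜ) (hs : s ≠ 0)
    (hy : y ≠ a) : ContDiffAt ℝ n (fun t ↦ v ((t - a) / s)) y :=
  (hv.contDiffAt (isOpen_compl_singleton.mem_nhds (div_ne_zero (sub_ne_zero.mpr hy) hs))).comp y
    (by fun_prop)

lemma contDiffAt_boundaryLayer {n : WithTop ℕ∞} (hu : ContDiffAt ℝ n u y)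
    (hv : ContDiffOn ℝ n v {0}ᶜ) (hs : s ≠ 0) (hy : y ≠ a) (c d k : ℂ) :
    ContDiffAt ℝ n (fun t ↦ ((u t : ℂ) + d) * c + k * v ((t - a) / s)) y :=
  ((hu.ofReal_comp.add contDiffAt_const).mul contDiffAt_const).add
    (contDiffAt_const.mul (contDiffAt_comp_sub_div hv hs hy))

lemma iteratedDeriv_boundaryLayer {n : ℕ} (hn : n ≠ 0) (hu : ContDiffAt ℝ n u y)
    (hv : ContDiffOn ℝ n v {0}ᶜ) (hs : s ≠ 0) (hy : y ≠ a) (c d k : ℂ) :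
    iteratedDeriv n (fun t ↦ ((u t : ℂ) + d) * c + k * v ((t - a) / s)) y
      = iteratedDeriv n u y * c + k * (s⁻¹ ^ n • iteratedDeriv n v ((y - a) / s)) := by
  have hu_C : ContDiffAt ℝ n (fun t ↦ ((u t : ℂ) + d) * c) y :=
    (hu.ofReal_comp.add contDiffAt_const).mul contDiffAt_const
  rw [iteratedDeriv_fun_add hu_C (contDiffAt_const.mul (contDiffAt_comp_sub_div hv hs hy)),
    iteratedDeriv_mul_const_field, iteratedDeriv_const_mul_field,
    iteratedDeriv_comp_sub_div hv hs hy]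
  simp only [add_comm _ d, iteratedDeriv_const_add (Nat.pos_of_ne_zero hn),
    iteratedDeriv_ofReal_comp hu]

end BoundaryLayer

theorem stmt11_general (a : ℝ) (Us : ℝ → ℝ)
    (hUs : ContDiffOn ℝ 3 Us (Set.Ioi 0))
    (b : ℝ)
    (τ : ℂ) (ε : ℝ) (hε : 0 < ε)
    (V : ℝ → ℂ) (hV : ContDiffOn ℝ 3 V {(0 : ℝ)}ᶜ)
    (hVeq : ∀ z : ℝ, z ≠ 0 →
      τ * ((τ + (b : ℂ) * (z : ℂ) ^ 2 / 2) * deriv V z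
          - (b : ℂ) * (z : ℂ) * V z) + iteratedDeriv 3 V z = 0)
    (Vε : ℝ → ℂ)
    (hVε : Vε = fun y : ℝ =>
      ((Us y : ℂ) + ((ε ^ ((2 : ℝ) / 3) : ℝ) : ℂ) * τ) * Heav (y - a)
        + ((ε ^ ((2 : ℝ) / 3) : ℝ) : ℂ) * V ((y - a) / ε ^ ((1 : ℝ) / 3)))
    (Rε : ℝ → ℂ)
    (hRε : Rε = fun y : ℝ =>
      ((ε : ℝ) : ℂ) *
        (Complex.I * τ *
            ((((ε ^ (-(2 : ℝ) / 3) : ℝ) * Us y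
                - (b / 2) * ((y - a) / ε ^ ((1 : ℝ) / 3)) ^ 2 : ℝ) : ℂ) *
                deriv V ((y - a) / ε ^ ((1 : ℝ) / 3))
              - (((ε ^ (-(1 : ℝ) / 3) : ℝ) * deriv Us y
                  - b * ((y - a) / ε ^ ((1 : ℝ) / 3)) : ℝ) : ℂ) *
                V ((y - a) / ε ^ ((1 : ℝ) / 3)))
          + ((ε ^ ((1 : ℝ) / 3) : ℝ) : ℂ) *
            (τ * deriv V ((y - a) / ε ^ ((1 : ℝ) / 3))
              + (((ε ^ (-(2 : ℝ) / 3) : ℝ) * Us y : ℝ) : ℂ) *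
                  deriv V ((y - a) / ε ^ ((1 : ℝ) / 3))
              - (((ε ^ (-(1 : ℝ) / 3) : ℝ) * deriv Us y : ℝ) : ℂ) *
                  V ((y - a) / ε ^ ((1 : ℝ) / 3)))
          + Complex.I * ((ε ^ ((1 : ℝ) / 3) : ℝ) : ℂ) * Heav (y - a) *
              ((deriv (deriv (deriv Us)) y : ℝ) : ℂ))) :
    ∀ y : ℝ, 0 < y → y ≠ a →
      ContDiffAt ℝ 3 Vε y ∧
      (Complex.I * τ + ((ε ^ ((1 : ℝ) / 3) : ℝ) : ℂ)) *
          ((((ε ^ ((2 : ℝ) / 3) : ℝ) : ℂ) * τ + (Us y : ℂ)) * deriv Vε y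
            - ((deriv Us y : ℝ) : ℂ) * Vε y)
        + Complex.I * ((ε ^ ((4 : ℝ) / 3) : ℝ) : ℂ) * iteratedDeriv 3 Vε y
        = Rε y := by
  intro y hy hya
  set s := ε ^ ((1 : ℝ) / 3)
  have hs : s ≠ 0 := (Real.rpow_pos_of_pos hε _).ne'
  have hsC : (s : ℂ) ≠ 0 := Complex.ofReal_ne_zero.mpr hs
  have hpow (k : ℕ) : ε ^ ((k : ℝ) / 3) = s ^ k := Real.rpow_natCast_div_three hε.le k
  have hpow2 : ε ^ ((2 : ℝ) / 3) = s ^ 2 := by simpa using hpow 2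
  have hpow3 : ε = s ^ 3 := by simpa using hpow 3
  have hpow4 : ε ^ ((4 : ℝ) / 3) = s ^ 4 := by simpa using hpow 4
  have hpow_neg1 : ε ^ (-(1 : ℝ) / 3) = s⁻¹ := by rw [neg_div, Real.rpow_neg hε.le]
  have hpow_neg2 : ε ^ (-(2 : ℝ) / 3) = (s ^ 2)⁻¹ := by
    rw [neg_div, Real.rpow_neg hε.le, hpow2]
  set g : ℝ → ℂ := fun t ↦ ((Us t : ℂ) + ((s ^ 2 : ℝ) : ℂ) * τ) * Heav (y - a)
    + ((s ^ 2 : ℝ) : ℂ) * V ((t - a) / s) with hg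
  have hloc : Vε =ᶠ[𝓝 y] g := by
    filter_upwards [Heav_comp_sub_eventuallyEq_const hya] with t ht
    simp only [hVε, hg, hpow2, ht]
  have hUs_y : ContDiffAt ℝ 3 Us y := hUs.contDiffAt (Ioi_mem_nhds hy)
  have hg_deriv (n : ℕ) (hn : n ≠ 0) (hn3 : n ≤ 3) := iteratedDeriv_boundaryLayer hn
    (hUs_y.of_le (by exact_mod_cast hn3)) (hV.of_le (by exact_mod_cast hn3)) hs hya
    (Heav (y - a)) (((s ^ 2 : ℝ) : ℂ) * τ) ((s ^ 2 : ℝ) : ℂ)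
  refine ⟨(contDiffAt_boundaryLayer hUs_y hV hs hya _ _ _).congr_of_eventuallyEq hloc, ?_⟩
  have hode := hVeq _ (div_ne_zero (sub_ne_zero.mpr hya) hs)
  have hUs3 : iteratedDeriv 3 Us y = deriv (deriv (deriv Us)) y := by
    simp [iteratedDeriv_eq_iterate]
  rw [hloc.eq_of_nhds, ← iteratedDeriv_one, hloc.iteratedDeriv_eq 1, hloc.iteratedDeriv_eq 3,
    hg_deriv 1 one_ne_zero (by norm_num), hg_deriv 3 three_ne_zero le_rfl, hUs3, hRε]
  simp only [hg, iteratedDeriv_one, hpow2, hpow4, hpow_neg1, hpow_neg2, Complex.real_smul,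
    pow_one]
  rw [hpow3]
  push_cast at hode ⊢
  linear_combination (norm := (field_simp; ring)) Complex.I * (s : ℂ) ^ 3 * hode

/-- The pointwise verification (away from `y = a`) underlying Proposition 2.1 of
the paper: the boundary-layer Ansatz `𝕍_ε` solves the reduced hyperbolic Prandtl
equation at frequency `k = 1/ε` up to the explicit remainder `ℛ_ε`. -/
theorem stmt11 (a : ℝ) (ha : 0 < a) (Us : ℝ → ℝ)
    (hUs : ContDiffOn ℝ 3 Us (Set.Ioi 0))
    (hUa : Us a = 0) (hUa' : deriv Us a = 0)
    (b : ℝ) (hb : b = deriv (deriv Us) a)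
    (τ : ℂ) (ε : ℝ) (hε : 0 < ε)
    (V : ℝ → ℂ) (hV : ContDiffOn ℝ 3 V {(0 : ℝ)}ᶜ)
    (hVeq : ∀ z : ℝ, z ≠ 0 →
      τ * ((τ + (b : ℂ) * (z : ℂ) ^ 2 / 2) * deriv V z
          - (b : ℂ) * (z : ℂ) * V z) + iteratedDeriv 3 V z = 0)
    (Vε : ℝ → ℂ)
    (hVε : Vε = fun y : ℝ =>
      ((Us y : ℂ) + ((ε ^ ((2 : ℝ) / 3) : ℝ) : ℂ) * τ) * Heav (y - a)
        + ((ε ^ ((2 : ℝ) / 3) : ℝ) : ℂ) * V ((y - a) / ε ^ ((1 : ℝ) / 3)))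
    (Rε : ℝ → ℂ)
    (hRε : Rε = fun y : ℝ =>
      ((ε : ℝ) : ℂ) *
        (Complex.I * τ *
            ((((ε ^ (-(2 : ℝ) / 3) : ℝ) * Us y
                - (b / 2) * ((y - a) / ε ^ ((1 : ℝ) / 3)) ^ 2 : ℝ) : ℂ) *
                deriv V ((y - a) / ε ^ ((1 : ℝ) / 3))
              - (((ε ^ (-(1 : ℝ) / 3) : ℝ) * deriv Us y
                  - b * ((y - a) / ε ^ ((1 : ℝ) / 3)) : ℝ) : ℂ) *
                V ((y - a) / ε ^ ((1 : ℝ) / 3)))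
          + ((ε ^ ((1 : ℝ) / 3) : ℝ) : ℂ) *
            (τ * deriv V ((y - a) / ε ^ ((1 : ℝ) / 3))
              + (((ε ^ (-(2 : ℝ) / 3) : ℝ) * Us y : ℝ) : ℂ) *
                  deriv V ((y - a) / ε ^ ((1 : ℝ) / 3))
              - (((ε ^ (-(1 : ℝ) / 3) : ℝ) * deriv Us y : ℝ) : ℂ) *
                  V ((y - a) / ε ^ ((1 : ℝ) / 3)))
          + Complex.I * ((ε ^ ((1 : ℝ) / 3) : ℝ) : ℂ) * Heav (y - a) *
              ((deriv (deriv (deriv Us)) y : ℝ) : ℂ))) :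
    ∀ y : ℝ, 0 < y → y ≠ a →
      ContDiffAt ℝ 3 Vε y ∧
      (Complex.I * τ + ((ε ^ ((1 : ℝ) / 3) : ℝ) : ℂ)) *
          ((((ε ^ ((2 : ℝ) / 3) : ℝ) : ℂ) * τ + (Us y : ℂ)) * deriv Vε y
            - ((deriv Us y : ℝ) : ℂ) * Vε y)
        + Complex.I * ((ε ^ ((4 : ℝ) / 3) : ℝ) : ℂ) * iteratedDeriv 3 Vε y
        = Rε y :=
  stmt11_general a Us hUs b τ ε hε V hV hVeq Vε hVε Rε hRε
end

section
/- Let α > 0, a > 0, τ ∈ ℂ, let U_s : [0, ∞) → ℝ be differentiable with U_s''(a) ≠ 0, and set κ := (|U_s''(a)|/2)^{1/3}. Let W : ℝ → ℂ be differentiable and suppose there are constants C_W > 0 and c > 0 with |W(z) − 1| ≤ C_W·e^{−c·z²} for z ≥ 0, |W(z)| ≤ C_W·e^{−c·z²} for z < 0, and |W'(z)| ≤ C_W·e^{−c·z²} for all z ∈ ℝ. For each natural number k ≥ 1 define 𝕌_k(y) := i·U_s'(y)·H(y − a) + i·τ·k^{−1/3}·κ·W'(κ·k^{1/3}·(y −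 a)) + i·U_s''(a)·(y − a)·( W(κ·k^{1/3}·(y − a)) − H(y − a) ) + i·k^{1/3}·κ·(U_s''(a)·(y − a)²/2)·W'(κ·k^{1/3}·(y − a)). Then there exists a constant C > 0 such that for every natural number k ≥ 1, sup_{y ≥ 0} e^{α·y}·| 𝕌_k(y) − i·U_s'(y)·H(y − a) | ≤ C·k^{−1/3}. -/
lemma gauss_poly_bound (β c t : ℝ) (hc : 0 < c) (ht : 0 ≤ t) (m : ℕ) (hm : m ≤ 2) :
    t ^ m * Real.exp (β * t - c * t ^ 2) ≤ Real.exp ((β + 2) ^ 2 / (4 * c)) := by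
  have hm2 : (m : ℝ) ≤ 2 := by exact_mod_cast hm
  have h1 : t ^ m ≤ Real.exp (2 * t) := by
    calc t ^ m ≤ (Real.exp t) ^ m :=
          pow_le_pow_left₀ ht (by linarith [Real.add_one_le_exp t]) m
      _ = Real.exp (m * t) := (Real.exp_nat_mul t m).symm
      _ ≤ Real.exp (2 * t) := Real.exp_le_exp.mpr
          (mul_le_mul_of_nonneg_right hm2 ht)
  calc t ^ m * Real.exp (β * t - c * t ^ 2)
      ≤ Real.exp (2 * t) * Real.exp (β * t - c * t ^ 2) :=
        mul_le_mul_of_nonneg_right h1 (Real.exp_nonneg _)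
    _ = Real.exp ((β + 2) * t - c * t ^ 2) := by
        rw [← Real.exp_add]; ring_nf
    _ ≤ Real.exp ((β + 2) ^ 2 / (4 * c)) := Real.exp_le_exp.mpr
        (by rw [le_div_iff₀ (by linarith : (0:ℝ) < 4 * c)]; nlinarith [sq_nonneg (β + 2 - 2 * c * t)])

/-- Section 3.3 of the paper: the velocity profiles `𝕌_k` converge to
`i U_s' H(· - a)` in the weighted sup-norm at rate `k^{-1/3}`. -/
theorem stmt12 (α a : ℝ) (hα : 0 < α) (ha : 0 < a)
    (τ : ℂ) (Us : ℝ → ℝ) (hUs : Differentiable ℝ Us)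
    (hUs'' : deriv (deriv Us) a ≠ 0)
    (κ : ℝ) (hκ : κ = (|deriv (deriv Us) a| / 2) ^ ((1 : ℝ) / 3))
    (W : ℝ → ℂ) (hW : Differentiable ℝ W)
    (CW c : ℝ) (hCW : 0 < CW) (hc : 0 < c)
    (hW1 : ∀ z : ℝ, 0 ≤ z → ‖W z - 1‖ ≤ CW * Real.exp (-c * z ^ 2))
    (hW0 : ∀ z : ℝ, z < 0 → ‖W z‖ ≤ CW * Real.exp (-c * z ^ 2))
    (hW' : ∀ z : ℝ, ‖deriv W z‖ ≤ CW * Real.exp (-c * z ^ 2))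
    (Uk : ℕ → ℝ → ℂ)
    (hUk : ∀ (k : ℕ) (y : ℝ), Uk k y =
      Complex.I * ((deriv Us y : ℝ) : ℂ) * Heav (y - a)
        + Complex.I * τ * (((k : ℝ) ^ (-(1 : ℝ) / 3) : ℝ) : ℂ) * (κ : ℂ) *
            deriv W (κ * (k : ℝ) ^ ((1 : ℝ) / 3) * (y - a))
        + Complex.I * ((deriv (deriv Us) a : ℝ) : ℂ) * ((y - a : ℝ) : ℂ) *
            (W (κ * (k : ℝ) ^ ((1 : ℝ) / 3) * (y - a)) - Heav (y - a))
        + Complex.I * (((k : ℝ) ^ ((1 : ℝ) / 3) : ℝ) : ℂ) * (κ : ℂ) *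
            ((deriv (deriv Us) a * (y - a) ^ 2 / 2 : ℝ) : ℂ) *
            deriv W (κ * (k : ℝ) ^ ((1 : ℝ) / 3) * (y - a))) :
    ∃ C : ℝ, 0 < C ∧ ∀ (k : ℕ), 1 ≤ k → ∀ y : ℝ, 0 ≤ y →
      Real.exp (α * y) *
          ‖Uk k y - Complex.I * ((deriv Us y : ℝ) : ℂ) * Heav (y - a)‖
        ≤ C * (k : ℝ) ^ (-(1 : ℝ) / 3) := by
  have hU2pos : 0 < |deriv (deriv Us) a| := abs_pos.mpr hUs''
  have hκ0 : 0 < κ := by rw [hκ]; positivity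
  set U2 := deriv (deriv Us) a with hU2def
  set β := α / κ with hβdef
  have hβ0 : 0 ≤ β := by rw [hβdef]; exact div_nonneg hα.le hκ0.le
  clear_value β
  set M := Real.exp ((β + 2) ^ 2 / (4 * c)) with hMdef
  have hM0 : 0 < M := Real.exp_pos _
  clear_value M
  set K := ‖τ‖ * κ + |U2| / κ + |U2| / (2 * κ) with hKdef
  have hK0 : 0 < K := by
    have h1 : 0 ≤ ‖τ‖ * κ := mul_nonneg (norm_nonneg τ) hκ0.le
    have h2 : 0 < |U2| / κ := div_pos hU2pos hκ0
    have h3 : 0 < |U2| / (2 * κ) := div_pos hU2pos (by linarith)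
    rw [hKdef]; linarith
  clear_value K
  refine ⟨Real.exp (α * a) * M * CW * K, by
    apply mul_pos (mul_pos (mul_pos (Real.exp_pos _) hM0) hCW) hK0, ?_⟩
  intro k hk y hy
  have hk1 : (1:ℝ) ≤ (k:ℝ) := by exact_mod_cast hk
  have hk0 : (0:ℝ) < (k:ℝ) := by linarith
  have hp1 : (1:ℝ) ≤ (k:ℝ) ^ ((1:ℝ)/3) := by
    calc (1:ℝ) = (1:ℝ) ^ ((1:ℝ)/3) := (Real.one_rpow _).symm
      _ ≤ (k:ℝ) ^ ((1:ℝ)/3) := Real.rpow_le_rpow (by norm_num) hk1 (by norm_num)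
  set p := (k:ℝ) ^ ((1:ℝ)/3) with hpdef
  have hp0 : (0:ℝ) < p := lt_of_lt_of_le one_pos hp1
  have hr : (k:ℝ) ^ (-(1:ℝ)/3) = p⁻¹ := by
    rw [hpdef, neg_div, Real.rpow_neg hk0.le]
  have hUky := hUk k y
  rw [hr, ← hpdef] at hUky
  clear_value p
  set z := κ * p * (y - a) with hzdef
  clear_value z
  set t := |z| with htdef
  have ht0 : 0 ≤ t := htdef ▸ abs_nonneg z
  have hzt : z ^ 2 = t ^ 2 := (sq_abs z).symm
  clear_value t
  have hκp0 : 0 < κ * p := mul_pos hκ0 hp0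
  have hya : (κ * p) * |y - a| = t := by
    rw [htdef, hzdef, abs_mul, abs_of_pos hκp0]
  have hyaeq : |y - a| = t / (κ * p) := by
    rw [eq_div_iff hκp0.ne']; linear_combination hya
  have hsq : (y - a) ^ 2 = t ^ 2 / (κ * p) ^ 2 := by
    rw [← hzt, hzdef]; field_simp
  set G := CW * Real.exp (-c * z ^ 2) with hGdef
  clear_value G
  have hG0 : (0:ℝ) ≤ G := hGdef ▸ mul_nonneg hCW.le (Real.exp_nonneg _)
  have hW'z : ‖deriv W z‖ ≤ G := by rw [hGdef]; exact hW' z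
  have hBz : ‖W z - Heav (y - a)‖ * |y - a| ≤ G * |y - a| := by
    rcases lt_trichotomy y a with h | h | h
    · have hz : z < 0 := by
        rw [hzdef]; exact mul_neg_of_pos_of_neg hκp0 (by linarith)
      have hH : Heav (y - a) = 0 := by
        simp only [Heav]; rw [if_neg (by linarith : ¬ (0:ℝ) < y - a)]
      rw [hH, sub_zero, hGdef]
      exact mul_le_mul_of_nonneg_right (hW0 z hz) (abs_nonneg _)
    · simp [h]
    · have hH : Heav (y - a) = 1 := by
        simp only [Heav]; rw [if_pos (by linarith : (0:ℝ) < y - a)]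
      have hz : (0:ℝ) ≤ z := by
        rw [hzdef]; exact mul_nonneg hκp0.le (by linarith)
      rw [hH, hGdef]
      exact mul_le_mul_of_nonneg_right (hW1 z hz) (abs_nonneg _)
  have hdiff : Uk k y - Complex.I * ((deriv Us y : ℝ) : ℂ) * Heav (y - a)
      = Complex.I * τ * ((p⁻¹ : ℝ) : ℂ) * (κ : ℂ) * deriv W z
        + Complex.I * ((U2 : ℝ) : ℂ) * ((y - a : ℝ) : ℂ) * (W z - Heav (y - a))
        + Complex.I * ((p : ℝ) : ℂ) * (κ : ℂ) * ((U2 * (y - a) ^ 2 / 2 : ℝ) : ℂ) *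
            deriv W z := by
    rw [hUky]; ring
  have n2 : ‖Complex.I * τ * ((p⁻¹ : ℝ) : ℂ) * (κ : ℂ) * deriv W z‖
      = ‖τ‖ * p⁻¹ * κ * ‖deriv W z‖ := by
    simp only [norm_mul, Complex.norm_I, Complex.norm_real, Real.norm_eq_abs,
      one_mul, abs_of_pos hκ0, abs_of_pos (inv_pos.mpr hp0)]
  have n3 : ‖Complex.I * ((U2 : ℝ) : ℂ) * ((y - a : ℝ) : ℂ) * (W z - Heav (y - a))‖
      = |U2| * |y - a| * ‖W z - Heav (y - a)‖ := by
    simp only [norm_mul, Complex.norm_I, Complex.norm_real, Real.norm_eq_abs, one_mul]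
  have n4 : ‖Complex.I * ((p : ℝ) : ℂ) * (κ : ℂ) * ((U2 * (y - a) ^ 2 / 2 : ℝ) : ℂ) *
        deriv W z‖ = p * κ * (|U2| * (y - a) ^ 2 / 2) * ‖deriv W z‖ := by
    simp only [norm_mul, Complex.norm_I, Complex.norm_real, Real.norm_eq_abs,
      one_mul, abs_of_pos hp0, abs_of_pos hκ0]
    rw [abs_div, abs_mul, abs_two, abs_pow, sq_abs]
  have e2 : ‖τ‖ * p⁻¹ * κ * ‖deriv W z‖ ≤ G * p⁻¹ * (‖τ‖ * κ) := by
    calc ‖τ‖ * p⁻¹ * κ * ‖deriv W z‖ ≤ ‖τ‖ * p⁻¹ * κ * G :=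
          mul_le_mul_of_nonneg_left hW'z
            (mul_nonneg (mul_nonneg (norm_nonneg τ) (inv_nonneg.mpr hp0.le)) hκ0.le)
      _ = G * p⁻¹ * (‖τ‖ * κ) := by ring
  have e3 : |U2| * |y - a| * ‖W z - Heav (y - a)‖ ≤ G * p⁻¹ * (|U2| / κ * t) := by
    calc |U2| * |y - a| * ‖W z - Heav (y - a)‖
        = |U2| * (‖W z - Heav (y - a)‖ * |y - a|) := by ring
      _ ≤ |U2| * (G * |y - a|) := mul_le_mul_of_nonneg_left hBz (abs_nonneg _)
      _ = G * p⁻¹ * (|U2| / κ * t) := by rw [hyaeq]; field_simp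
  have e4 : p * κ * (|U2| * (y - a) ^ 2 / 2) * ‖deriv W z‖
      ≤ G * p⁻¹ * (|U2| / (2 * κ) * t ^ 2) := by
    calc p * κ * (|U2| * (y - a) ^ 2 / 2) * ‖deriv W z‖
        ≤ p * κ * (|U2| * (y - a) ^ 2 / 2) * G :=
          mul_le_mul_of_nonneg_left hW'z
            (mul_nonneg (mul_nonneg hp0.le hκ0.le) (by positivity))
      _ = G * p⁻¹ * (|U2| / (2 * κ) * t ^ 2) := by rw [hsq]; field_simp
  have total : ‖Uk k y - Complex.I * ((deriv Us y : ℝ) : ℂ) * Heav (y - a)‖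
      ≤ G * p⁻¹ * (‖τ‖ * κ) + G * p⁻¹ * (|U2| / κ * t) + G * p⁻¹ * (|U2| / (2 * κ) * t ^ 2) := by
    rw [hdiff]
    refine le_trans norm_add₃_le ?_
    rw [n2, n3, n4]
    exact add_le_add (add_le_add e2 e3) e4
  -- weight estimates
  have hw : ∀ m : ℕ, m ≤ 2 → Real.exp (α * y) * Real.exp (-c * z ^ 2) * t ^ m
      ≤ Real.exp (α * a) * M := by
    intro m hm
    have hya' : y - a ≤ t / κ := by
      have h2 : y - a ≤ |y - a| := le_abs_self _
      have h3 : t / (κ * p) ≤ t / κ := by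
        exact div_le_div_of_nonneg_left ht0 hκ0 (le_mul_of_one_le_right hκ0.le hp1)
      rw [hyaeq] at h2; linarith
    have h1 : α * y ≤ α * a + β * t := by
      have h4 : α * (y - a) ≤ α * (t / κ) := mul_le_mul_of_nonneg_left hya' hα.le
      have h5 : β * t = α * (t / κ) := by rw [hβdef]; ring
      have h6 : α * y = α * a + α * (y - a) := by ring
      linarith
    have h2 : Real.exp (α * y) * Real.exp (-c * z ^ 2)
        ≤ Real.exp (α * a) * Real.exp (β * t - c * t ^ 2) := by
      rw [← Real.exp_add, ← Real.exp_add, hzt]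
      exact Real.exp_le_exp.mpr (by linarith)
    calc Real.exp (α * y) * Real.exp (-c * z ^ 2) * t ^ m
        ≤ Real.exp (α * a) * Real.exp (β * t - c * t ^ 2) * t ^ m :=
          mul_le_mul_of_nonneg_right h2 (pow_nonneg ht0 m)
      _ = Real.exp (α * a) * (t ^ m * Real.exp (β * t - c * t ^ 2)) := by ring
      _ ≤ Real.exp (α * a) * M := by
          rw [hMdef]
          exact mul_le_mul_of_nonneg_left (gauss_poly_bound β c t hc ht0 m hm)
            (Real.exp_nonneg _)
  have hw0 : Real.exp (α * y) * Real.exp (-c * z ^ 2) ≤ Real.exp (α * a) * M := by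
    have := hw 0 (by norm_num); simpa using this
  have hw1 : Real.exp (α * y) * Real.exp (-c * z ^ 2) * t ≤ Real.exp (α * a) * M := by
    have := hw 1 (by norm_num); simpa using this
  have hw2 : Real.exp (α * y) * Real.exp (-c * z ^ 2) * t ^ 2 ≤ Real.exp (α * a) * M :=
    hw 2 le_rfl
  rw [hr]
  have hexpy : (0:ℝ) ≤ Real.exp (α * y) := (Real.exp_pos _).le
  calc Real.exp (α * y) * ‖Uk k y - Complex.I * ((deriv Us y : ℝ) : ℂ) * Heav (y - a)‖
      ≤ Real.exp (α * y) *
        (G * p⁻¹ * (‖τ‖ * κ) + G * p⁻¹ * (|U2| / κ * t) + G * p⁻¹ * (|U2| / (2 * κ) * t ^ 2)) :=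
        mul_le_mul_of_nonneg_left total hexpy
    _ = CW * p⁻¹ * ((Real.exp (α * y) * Real.exp (-c * z ^ 2)) * (‖τ‖ * κ)
          + (Real.exp (α * y) * Real.exp (-c * z ^ 2) * t) * (|U2| / κ)
          + (Real.exp (α * y) * Real.exp (-c * z ^ 2) * t ^ 2) * (|U2| / (2 * κ))) := by
        rw [hGdef]; ring
    _ ≤ CW * p⁻¹ * ((Real.exp (α * a) * M) * (‖τ‖ * κ)
          + (Real.exp (α * a) * M) * (|U2| / κ)
          + (Real.exp (α * a) * M) * (|U2| / (2 * κ))) := by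
        have g1 := mul_le_mul_of_nonneg_right hw0 (mul_nonneg (norm_nonneg τ) hκ0.le)
        have g2 := mul_le_mul_of_nonneg_right hw1 (show (0:ℝ) ≤ |U2| / κ from div_nonneg (abs_nonneg U2) hκ0.le)
        have g3 := mul_le_mul_of_nonneg_right hw2 (show (0:ℝ) ≤ |U2| / (2 * κ) from div_nonneg (abs_nonneg U2) (by linarith))
        have hcp : (0:ℝ) ≤ CW * p⁻¹ := mul_nonneg hCW.le (inv_nonneg.mpr hp0.le)
        exact mul_le_mul_of_nonneg_left (by linarith) hcp
    _ = Real.exp (α * a) * M * CW * K * p⁻¹ := by rw [hKdef]; ring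
end

section
/- Let α > 0, a > 0, τ ∈ ℂ, let U_s : [0, ∞) → ℝ be continuously differentiable with U_s'(a) = 0, with U_s' differentiable at a and U_s''(a) ≠ 0, and with sup_{y ≥ 0} e^{α·y}·|U_s'(y)| < ∞; set κ := (|U_s''(a)|/2)^{1/3}. Let W : ℝ → ℂ be differentiable and suppose there are constants C_W > 0 and c > 0 with |W(z) − 1| ≤ C_W·e^{−c·z²} for z ≥ 0, |W(z)| ≤ C_W·e^{−c·z²} for z < 0, and |W'(z)| ≤ C_W·e^{−c·z²} for all z ∈ ℝ. For each natural number k ≥ 1 define 𝕌_k(y) := i·U_s'(y)·H(y − a) + i·τ·k^{−1/3}·κ·W'(κ·k^{1/3}·(y − a)) + i·U_s''(a)·(y − a)·( W(κ·k^{1/3}·(y − a)) − H(y − a) ) + i·k^{1/3}·κ·(U_s''(a)·(y − a)²/2)·W'(κ·k^{1/3}·(y − a)). Then there exist constants C > 0, c₀ > 0 and a natural number k₀ such that sup_{y ≥ 0} e^{α·y}·|𝕌_k(y)| ≤ C for every k ≥ 1, and sup_{y ≥ 0} e^{α·y}·|𝕌_k(y)| ≥ c₀ for every k ≥ k₀.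 -/
lemma quad_bound (A β t : ℝ) (hβ : 0 < β) :
    Real.exp (A * t - β * t ^ 2) ≤ Real.exp (A ^ 2 / (4 * β)) := by
  apply Real.exp_le_exp.mpr
  rw [le_div_iff₀ (by positivity)]
  nlinarith [sq_nonneg (2 * β * t - A)]

lemma sq_exp_bound (β t : ℝ) (hβ : 0 < β) :
    t ^ 2 * Real.exp (-(β * t ^ 2)) ≤ 1 / β := by
  have h1 : β * t ^ 2 ≤ Real.exp (β * t ^ 2) := by
    linarith [Real.add_one_le_exp (β * t ^ 2)]
  rw [Real.exp_neg, ← div_eq_mul_inv, div_le_div_iff₀ (Real.exp_pos _) hβ]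
  nlinarith

lemma abs_exp_bound (β t : ℝ) (hβ : 0 < β) :
    |t| * Real.exp (-(β * t ^ 2)) ≤ 1 + 1 / β := by
  have h1 : |t| ≤ 1 + t ^ 2 := by nlinarith [sq_abs t, sq_nonneg (|t| - 1), abs_nonneg t]
  have h2 : Real.exp (-(β * t ^ 2)) ≤ 1 := by
    rw [show (1:ℝ) = Real.exp 0 from (Real.exp_zero).symm]
    apply Real.exp_le_exp.mpr; nlinarith [sq_nonneg t]
  calc |t| * Real.exp (-(β * t ^ 2)) ≤ (1 + t ^ 2) * Real.exp (-(β * t ^ 2)) := by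
        exact mul_le_mul_of_nonneg_right h1 (Real.exp_pos _).le
    _ = Real.exp (-(β * t ^ 2)) + t ^ 2 * Real.exp (-(β * t ^ 2)) := by ring
    _ ≤ 1 + 1 / β := add_le_add h2 (sq_exp_bound β t hβ)

lemma exp_neg_le (u : ℝ) (hu : 0 < u) : Real.exp (-u) ≤ 4 / u ^ 2 := by
  have h : 1 + u / 2 ≤ Real.exp (u / 2) := by linarith [Real.add_one_le_exp (u / 2)]
  have h2 : u ^ 2 / 4 ≤ Real.exp u := by
    have h3 := mul_le_mul h h (by linarith) (Real.exp_pos _).le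
    rw [← Real.exp_add, show u / 2 + u / 2 = u from by ring] at h3
    nlinarith [h3]
  rw [Real.exp_neg]
  have h4 := inv_anti₀ (by positivity : (0:ℝ) < u ^ 2 / 4) h2
  calc (Real.exp u)⁻¹ ≤ (u ^ 2 / 4)⁻¹ := h4
    _ = 4 / u ^ 2 := by field_simp


set_option maxHeartbeats 1000000 in
/-- The uniform two-sided bound (2.9) of Proposition 2.1 of the paper for the
velocity profiles `𝕌_k` in the weighted sup-norm. -/
theorem stmt13 (α a : ℝ) (hα : 0 < α) (ha : 0 < a)
    (τ : ℂ) (Us : ℝ → ℝ) (hUs : ContDiff ℝ 1 Us)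
    (hUsa : deriv Us a = 0)
    (hUs' : DifferentiableAt ℝ (deriv Us) a)
    (hUs'' : deriv (deriv Us) a ≠ 0)
    (hUsbd : ∃ M : ℝ, ∀ y : ℝ, 0 ≤ y → Real.exp (α * y) * |deriv Us y| ≤ M)
    (κ : ℝ) (hκ : κ = (|deriv (deriv Us) a| / 2) ^ ((1 : ℝ) / 3))
    (W : ℝ → ℂ) (hW : Differentiable ℝ W)
    (CW c : ℝ) (hCW : 0 < CW) (hc : 0 < c)
    (hW1 : ∀ z : ℝ, 0 ≤ z → ‖W z - 1‖ ≤ CW * Real.exp (-c * z ^ 2))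
    (hW0 : ∀ z : ℝ, z < 0 → ‖W z‖ ≤ CW * Real.exp (-c * z ^ 2))
    (hW' : ∀ z : ℝ, ‖deriv W z‖ ≤ CW * Real.exp (-c * z ^ 2))
    (Uk : ℕ → ℝ → ℂ)
    (hUk : ∀ (k : ℕ) (y : ℝ), Uk k y =
      Complex.I * ((deriv Us y : ℝ) : ℂ) * Heav (y - a)
        + Complex.I * τ * (((k : ℝ) ^ (-(1 : ℝ) / 3) : ℝ) : ℂ) * (κ : ℂ) *
            deriv W (κ * (k : ℝ) ^ ((1 : ℝ) / 3) * (y - a))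
        + Complex.I * ((deriv (deriv Us) a : ℝ) : ℂ) * ((y - a : ℝ) : ℂ) *
            (W (κ * (k : ℝ) ^ ((1 : ℝ) / 3) * (y - a)) - Heav (y - a))
        + Complex.I * (((k : ℝ) ^ ((1 : ℝ) / 3) : ℝ) : ℂ) * (κ : ℂ) *
            ((deriv (deriv Us) a * (y - a) ^ 2 / 2 : ℝ) : ℂ) *
            deriv W (κ * (k : ℝ) ^ ((1 : ℝ) / 3) * (y - a))) :
    ∃ (C c₀ : ℝ) (k₀ : ℕ), 0 < C ∧ 0 < c₀ ∧
      (∀ (k : ℕ), 1 ≤ k → ∀ y : ℝ, 0 ≤ y →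
        Real.exp (α * y) * ‖Uk k y‖ ≤ C) ∧
      (∀ (k : ℕ), k₀ ≤ k →
        c₀ ≤ ⨆ y : {y : ℝ // 0 ≤ y}, Real.exp (α * (y : ℝ)) * ‖Uk k y‖) := by
  obtain ⟨M, hM⟩ := hUsbd
  have hM0 : 0 ≤ M := le_trans (by positivity) (hM 0 le_rfl)
  have hDpos : 0 < |deriv (deriv Us) a| := abs_pos.mpr hUs''
  have hκpos : 0 < κ := by rw [hκ]; exact Real.rpow_pos_of_pos (by positivity) _
  set D := deriv (deriv Us) a with hDdef
  set β := c * κ ^ 2 with hβdef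
  have hβ : 0 < β := by rw [hβdef]; positivity
  set K2 := ‖τ‖ * κ * CW * Real.exp (α * a) * Real.exp (α ^ 2 / (4 * β)) with hK2def
  set K3 := |D| * CW * Real.exp (α * a) *
      ((1 + 1 / (β / 2)) * Real.exp (α ^ 2 / (4 * (β / 2)))) with hK3def
  set K4 := κ * |D| * CW / 2 * Real.exp (α * a) *
      ((1 / (β / 2)) * Real.exp (α ^ 2 / (4 * (β / 2)))) with hK4def
  have hK2 : 0 ≤ K2 := by rw [hK2def]; positivity
  have hK3 : 0 ≤ K3 := by rw [hK3def]; positivity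
  have hK4 : 0 ≤ K4 := by rw [hK4def]; positivity
  set C := M + K2 + K3 + K4 + 1 with hCdef
  have hCpos : 0 < C := by rw [hCdef]; linarith
  -- the uniform upper bound
  have key : ∀ (k : ℕ), 1 ≤ k → ∀ y : ℝ, 0 ≤ y →
      Real.exp (α * y) * ‖Uk k y‖ ≤ C := by
    intro k hk y hy
    have hr1 : (1:ℝ) ≤ (k:ℝ) ^ ((1:ℝ)/3) := by
      have h := Real.rpow_le_rpow zero_le_one
        (show (1:ℝ) ≤ (k:ℝ) from by exact_mod_cast hk) (by norm_num : (0:ℝ) ≤ 1/3)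
      rwa [Real.one_rpow] at h
    have hρ1 : (k:ℝ) ^ (-(1:ℝ)/3) ≤ 1 := by
      rw [show (-(1:ℝ))/3 = -((1:ℝ)/3) from by norm_num, Real.rpow_neg (Nat.cast_nonneg k)]
      exact inv_le_one_of_one_le₀ hr1
    have hρ0 : (0:ℝ) ≤ (k:ℝ) ^ (-(1:ℝ)/3) := Real.rpow_nonneg (Nat.cast_nonneg k) _
    rw [hUk]
    set r := (k:ℝ) ^ ((1:ℝ)/3) with hrdef
    have hrpos : 0 < r := lt_of_lt_of_le one_pos hr1
    set t := y - a with htdef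
    set z := κ * r * t with hzdef
    have hz2 : β * t ^ 2 ≤ c * z ^ 2 := by
      have hz' : z ^ 2 = κ ^ 2 * r ^ 2 * t ^ 2 := by rw [hzdef]; ring
      have hr2 : (1:ℝ) ≤ r ^ 2 := by nlinarith
      rw [hz', hβdef]
      nlinarith [mul_nonneg (mul_nonneg hc.le (sq_nonneg κ)) (sq_nonneg t)]
    have hcz : Real.exp (-c * z ^ 2) ≤ Real.exp (-(β * t ^ 2)) := by
      apply Real.exp_le_exp.mpr; linarith
    have hexpy : Real.exp (α * y) = Real.exp (α * a) * Real.exp (α * t) := by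
      rw [← Real.exp_add]; congr 1; rw [htdef]; ring
    have hH : ‖Heav t‖ ≤ 1 := by unfold Heav; split <;> simp
    -- term 1
    have b1 : Real.exp (α * y) * ‖Complex.I * ((deriv Us y : ℝ) : ℂ) * Heav t‖ ≤ M := by
      have n1 : ‖Complex.I * ((deriv Us y : ℝ) : ℂ) * Heav t‖ ≤ |deriv Us y| := by
        rw [norm_mul, norm_mul]
        simp only [Complex.norm_I, Complex.norm_real, Real.norm_eq_abs, one_mul]
        calc |deriv Us y| * ‖Heav t‖ ≤ |deriv Us y| * 1 :=
              mul_le_mul_of_nonneg_left hH (abs_nonneg _)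
          _ = |deriv Us y| := mul_one _
      calc Real.exp (α * y) * ‖Complex.I * ((deriv Us y : ℝ) : ℂ) * Heav t‖
          ≤ Real.exp (α * y) * |deriv Us y| :=
            mul_le_mul_of_nonneg_left n1 (Real.exp_pos _).le
        _ ≤ M := hM y hy
    -- term 2
    have b2 : Real.exp (α * y) *
        ‖Complex.I * τ * (((k : ℝ) ^ (-(1:ℝ)/3) : ℝ) : ℂ) * (κ : ℂ) * deriv W z‖ ≤ K2 := by
      have n2 : ‖Complex.I * τ * (((k : ℝ) ^ (-(1:ℝ)/3) : ℝ) : ℂ) * (κ : ℂ) * deriv W z‖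
          = ‖τ‖ * ((k:ℝ) ^ (-(1:ℝ)/3)) * κ * ‖deriv W z‖ := by
        simp only [norm_mul, Complex.norm_I, Complex.norm_real, Real.norm_eq_abs, one_mul,
          abs_of_nonneg hρ0, abs_of_pos hκpos]
      rw [n2, hexpy]
      have hsplit : Real.exp (α * t) * Real.exp (-(β * t ^ 2))
          = Real.exp (α * t - β * t ^ 2) := by rw [← Real.exp_add]; congr 1; try ring
      calc Real.exp (α * a) * Real.exp (α * t) * (‖τ‖ * ((k:ℝ) ^ (-(1:ℝ)/3)) * κ * ‖deriv W z‖)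
          ≤ Real.exp (α * a) * Real.exp (α * t) * (‖τ‖ * 1 * κ * (CW * Real.exp (-c * z ^ 2))) := by
            apply mul_le_mul_of_nonneg_left _ (by positivity)
            apply mul_le_mul _ (hW' z) (norm_nonneg _) (by positivity)
            apply mul_le_mul_of_nonneg_right _ hκpos.le
            exact mul_le_mul_of_nonneg_left hρ1 (norm_nonneg _)
        _ = ‖τ‖ * κ * CW * Real.exp (α * a) * (Real.exp (α * t) * Real.exp (-c * z ^ 2)) := by
            ring
        _ ≤ ‖τ‖ * κ * CW * Real.exp (α * a) * (Real.exp (α * t) * Real.exp (-(β * t ^ 2))) := by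
            apply mul_le_mul_of_nonneg_left _ (by positivity)
            exact mul_le_mul_of_nonneg_left hcz (Real.exp_pos _).le
        _ = ‖τ‖ * κ * CW * Real.exp (α * a) * Real.exp (α * t - β * t ^ 2) := by rw [hsplit]
        _ ≤ ‖τ‖ * κ * CW * Real.exp (α * a) * Real.exp (α ^ 2 / (4 * β)) := by
            exact mul_le_mul_of_nonneg_left (quad_bound α β t hβ) (by positivity)
        _ = K2 := by rw [hK2def]
    -- term 3
    have b3 : Real.exp (α * y) *
        ‖Complex.I * ((D : ℝ) : ℂ) * ((t : ℝ) : ℂ) * (W z - Heav t)‖ ≤ K3 := by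
      have n3 : ‖Complex.I * ((D : ℝ) : ℂ) * ((t : ℝ) : ℂ) * (W z - Heav t)‖
          = |D| * (|t| * ‖W z - Heav t‖) := by
        simp only [norm_mul, Complex.norm_I, Complex.norm_real, Real.norm_eq_abs, one_mul]
        ring
      have hWH : |t| * ‖W z - Heav t‖ ≤ |t| * (CW * Real.exp (-c * z ^ 2)) := by
        rcases lt_trichotomy t 0 with h | h | h
        · have hzneg : z < 0 := mul_neg_of_pos_of_neg (by positivity) h
          rw [show Heav t = 0 from if_neg (not_lt.mpr h.le), sub_zero]
          exact mul_le_mul_of_nonneg_left (hW0 z hzneg) (abs_nonneg t)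
        · simp [h]
        · rw [show Heav t = 1 from if_pos h]
          exact mul_le_mul_of_nonneg_left (hW1 z (le_of_lt (mul_pos (by positivity) h)))
            (abs_nonneg t)
      have hsplit : Real.exp (α * t) * Real.exp (-(β * t ^ 2))
          = Real.exp (-(β / 2 * t ^ 2)) * Real.exp (α * t - β / 2 * t ^ 2) := by
        rw [← Real.exp_add, ← Real.exp_add]; congr 1; ring
      rw [n3, hexpy]
      calc Real.exp (α * a) * Real.exp (α * t) * (|D| * (|t| * ‖W z - Heav t‖))
          ≤ Real.exp (α * a) * Real.exp (α * t) * (|D| * (|t| * (CW * Real.exp (-c * z ^ 2)))) := by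
            apply mul_le_mul_of_nonneg_left _ (by positivity)
            exact mul_le_mul_of_nonneg_left hWH (abs_nonneg D)
        _ ≤ Real.exp (α * a) * Real.exp (α * t) * (|D| * (|t| * (CW * Real.exp (-(β * t ^ 2))))) := by
            apply mul_le_mul_of_nonneg_left _ (by positivity)
            apply mul_le_mul_of_nonneg_left _ (abs_nonneg D)
            apply mul_le_mul_of_nonneg_left _ (abs_nonneg t)
            exact mul_le_mul_of_nonneg_left hcz hCW.le
        _ = |D| * Real.exp (α * a) * ((Real.exp (α * t) * Real.exp (-(β * t ^ 2))) * (|t| * CW)) := by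
            ring
        _ = |D| * Real.exp (α * a) *
              ((Real.exp (-(β / 2 * t ^ 2)) * Real.exp (α * t - β / 2 * t ^ 2)) * (|t| * CW)) := by
            rw [hsplit]
        _ = |D| * CW * Real.exp (α * a) *
              ((|t| * Real.exp (-(β / 2 * t ^ 2))) * Real.exp (α * t - β / 2 * t ^ 2)) := by
            ring
        _ ≤ |D| * CW * Real.exp (α * a) *
              ((1 + 1 / (β / 2)) * Real.exp (α ^ 2 / (4 * (β / 2)))) := by
            apply mul_le_mul_of_nonneg_left _ (by positivity)
            exact mul_le_mul (abs_exp_bound (β / 2) t (by positivity))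
              (quad_bound α (β / 2) t (by positivity)) (Real.exp_pos _).le (by positivity)
        _ = K3 := by rw [hK3def]
    -- term 4
    have b4 : Real.exp (α * y) *
        ‖Complex.I * ((r : ℝ) : ℂ) * (κ : ℂ) * ((D * t ^ 2 / 2 : ℝ) : ℂ) * deriv W z‖ ≤ K4 := by
      have n4 : ‖Complex.I * ((r : ℝ) : ℂ) * (κ : ℂ) * ((D * t ^ 2 / 2 : ℝ) : ℂ) * deriv W z‖
          = r * κ * (|D| * t ^ 2 / 2) * ‖deriv W z‖ := by
        simp only [norm_mul, Complex.norm_I, Complex.norm_real, Real.norm_eq_abs, one_mul,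
          abs_of_pos hrpos, abs_of_pos hκpos, abs_div, abs_mul, abs_pow, sq_abs, abs_two]
      set s := r * t with hsdef
      have hze : Real.exp (-c * z ^ 2) = Real.exp (-(β * s ^ 2)) := by
        congr 1; rw [hzdef, hsdef, hβdef]; ring
      have hrt : r * t ^ 2 ≤ s ^ 2 := by
        have hs2 : s ^ 2 = r ^ 2 * t ^ 2 := by rw [hsdef]; ring
        nlinarith [mul_nonneg (mul_nonneg hrpos.le (sub_nonneg.mpr hr1)) (sq_nonneg t)]
      have hts : Real.exp (α * t) ≤ Real.exp (α * |s|) := by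
        apply Real.exp_le_exp.mpr
        apply mul_le_mul_of_nonneg_left _ hα.le
        calc t ≤ |t| := le_abs_self t
          _ ≤ |s| := by
            rw [hsdef, abs_mul, abs_of_pos hrpos]
            nlinarith [abs_nonneg t]
      have hsplit : Real.exp (α * |s|) * Real.exp (-(β * s ^ 2))
          = Real.exp (-(β / 2 * s ^ 2)) * Real.exp (α * |s| - β / 2 * |s| ^ 2) := by
        rw [← Real.exp_add, ← Real.exp_add]; congr 1; rw [sq_abs]; ring
      rw [n4, hexpy]
      calc Real.exp (α * a) * Real.exp (α * t) * (r * κ * (|D| * t ^ 2 / 2) * ‖deriv W z‖)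
          ≤ Real.exp (α * a) * Real.exp (α * t) *
              (r * κ * (|D| * t ^ 2 / 2) * (CW * Real.exp (-(β * s ^ 2)))) := by
            apply mul_le_mul_of_nonneg_left _ (by positivity)
            apply mul_le_mul_of_nonneg_left _ (by positivity)
            rw [← hze]; exact hW' z
        _ = κ * |D| * CW / 2 * Real.exp (α * a) *
              ((r * t ^ 2) * (Real.exp (α * t) * Real.exp (-(β * s ^ 2)))) := by ring
        _ ≤ κ * |D| * CW / 2 * Real.exp (α * a) *
              ((s ^ 2) * (Real.exp (α * |s|) * Real.exp (-(β * s ^ 2)))) := by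
            apply mul_le_mul_of_nonneg_left _ (by positivity)
            apply mul_le_mul hrt (mul_le_mul_of_nonneg_right hts (Real.exp_pos _).le)
              (by positivity) (sq_nonneg s)
        _ = κ * |D| * CW / 2 * Real.exp (α * a) *
              ((s ^ 2 * Real.exp (-(β / 2 * s ^ 2))) * Real.exp (α * |s| - β / 2 * |s| ^ 2)) := by
            rw [hsplit]; ring
        _ ≤ κ * |D| * CW / 2 * Real.exp (α * a) *
              ((1 / (β / 2)) * Real.exp (α ^ 2 / (4 * (β / 2)))) := by
            apply mul_le_mul_of_nonneg_left _ (by positivity)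
            exact mul_le_mul (sq_exp_bound (β / 2) s (by positivity))
              (quad_bound α (β / 2) |s| (by positivity)) (Real.exp_pos _).le (by positivity)
        _ = K4 := by rw [hK4def]
    -- combine
    have hsum : ‖Complex.I * ((deriv Us y : ℝ) : ℂ) * Heav t
        + Complex.I * τ * (((k : ℝ) ^ (-(1:ℝ)/3) : ℝ) : ℂ) * (κ : ℂ) * deriv W z
        + Complex.I * ((D : ℝ) : ℂ) * ((t : ℝ) : ℂ) * (W z - Heav t)
        + Complex.I * ((r : ℝ) : ℂ) * (κ : ℂ) * ((D * t ^ 2 / 2 : ℝ) : ℂ) * deriv W z‖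
        ≤ ‖Complex.I * ((deriv Us y : ℝ) : ℂ) * Heav t‖
        + ‖Complex.I * τ * (((k : ℝ) ^ (-(1:ℝ)/3) : ℝ) : ℂ) * (κ : ℂ) * deriv W z‖
        + ‖Complex.I * ((D : ℝ) : ℂ) * ((t : ℝ) : ℂ) * (W z - Heav t)‖
        + ‖Complex.I * ((r : ℝ) : ℂ) * (κ : ℂ) * ((D * t ^ 2 / 2 : ℝ) : ℂ) * deriv W z‖ := by
      calc _ ≤ ‖Complex.I * ((deriv Us y : ℝ) : ℂ) * Heav t
            + Complex.I * τ * (((k : ℝ) ^ (-(1:ℝ)/3) : ℝ) : ℂ) * (κ : ℂ) * deriv W z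
            + Complex.I * ((D : ℝ) : ℂ) * ((t : ℝ) : ℂ) * (W z - Heav t)‖
            + ‖Complex.I * ((r : ℝ) : ℂ) * (κ : ℂ) * ((D * t ^ 2 / 2 : ℝ) : ℂ) * deriv W z‖ :=
            norm_add_le _ _
        _ ≤ _ := by
            gcongr
            calc _ ≤ ‖Complex.I * ((deriv Us y : ℝ) : ℂ) * Heav t
                + Complex.I * τ * (((k : ℝ) ^ (-(1:ℝ)/3) : ℝ) : ℂ) * (κ : ℂ) * deriv W z‖
                + ‖Complex.I * ((D : ℝ) : ℂ) * ((t : ℝ) : ℂ) * (W z - Heav t)‖ :=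
                norm_add_le _ _
              _ ≤ _ := by gcongr; exact norm_add_le _ _
    refine le_trans (mul_le_mul_of_nonneg_left hsum (Real.exp_pos _).le) ?_
    rw [mul_add, mul_add, mul_add, hCdef]
    linarith [b1, b2, b3, b4]
  -- find a point y₀ > a where deriv Us ≠ 0
  have hd : HasDerivAt (deriv Us) D a := hUs'.hasDerivAt
  have hslope := hasDerivAt_iff_tendsto_slope.mp hd
  have hev : ∀ᶠ x in nhdsWithin a {a}ᶜ, slope (deriv Us) a x ≠ 0 :=
    hslope.eventually_ne hUs''
  have hev' : ∀ᶠ x in nhdsWithin a (Set.Ioi a), slope (deriv Us) a x ≠ 0 :=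
    hev.filter_mono (nhdsWithin_mono a (fun x hx => ne_of_gt hx))
  obtain ⟨y₀, hy₀s, hy₀a⟩ :
      ∃ x, slope (deriv Us) a x ≠ 0 ∧ a < x :=
    (hev'.and (eventually_mem_nhdsWithin)).exists
  have hy₀pos : 0 < y₀ := lt_trans ha hy₀a
  have hu0 : deriv Us y₀ ≠ 0 := by
    intro h0
    apply hy₀s
    rw [slope_def_field, h0, hUsa]
    simp
  set ε := |deriv Us y₀| with hεdef
  have hε : 0 < ε := abs_pos.mpr hu0
  set t₀ := y₀ - a with ht₀def
  have ht₀ : 0 < t₀ := sub_pos.mpr hy₀a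
  set βl := c * κ ^ 2 * t₀ ^ 2 with hβldef
  have hβl : 0 < βl := by rw [hβldef]; positivity
  set A := ‖τ‖ * κ * CW + |D| * t₀ * CW + κ * |D| * t₀ ^ 2 * CW / 2 + 1 with hAdef
  have hA : 0 < A := by rw [hAdef]; positivity
  obtain ⟨n, hn⟩ := exists_nat_ge (8 * A / (βl ^ 2 * ε) * 2)
  refine ⟨C, ε / 2, max n 1, hCpos, by positivity, key, ?_⟩
  intro k hk
  have hk1 : 1 ≤ k := le_trans (le_max_right n 1) hk
  have hkn : (n : ℝ) ≤ (k : ℝ) := by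
    exact_mod_cast le_trans (le_max_left n 1) hk
  have hr1 : (1:ℝ) ≤ (k:ℝ) ^ ((1:ℝ)/3) := by
    have h := Real.rpow_le_rpow zero_le_one
      (show (1:ℝ) ≤ (k:ℝ) from by exact_mod_cast hk1) (by norm_num : (0:ℝ) ≤ 1/3)
    rwa [Real.one_rpow] at h
  set r := (k:ℝ) ^ ((1:ℝ)/3) with hrdef
  have hrpos : 0 < r := lt_of_lt_of_le one_pos hr1
  have hr3 : r ^ (3:ℕ) = (k:ℝ) := by
    rw [hrdef, ← Real.rpow_natCast ((k:ℝ) ^ ((1:ℝ)/3)) 3, ← Real.rpow_mul (Nat.cast_nonneg k)]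
    norm_num
  have hρ1 : (k:ℝ) ^ (-(1:ℝ)/3) ≤ 1 := by
    rw [show (-(1:ℝ))/3 = -((1:ℝ)/3) from by norm_num, Real.rpow_neg (Nat.cast_nonneg k)]
    exact inv_le_one_of_one_le₀ hr1
  have hρ0 : (0:ℝ) ≤ (k:ℝ) ^ (-(1:ℝ)/3) := Real.rpow_nonneg (Nat.cast_nonneg k) _
  set z₀ := κ * r * t₀ with hz₀def
  have hz₀pos : 0 < z₀ := by rw [hz₀def]; positivity
  clear_value z₀ r A βl t₀ ε C K4 K3 K2 β D
  -- norm of the main term and error terms at y₀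
  have hHt₀ : Heav (y₀ - a) = 1 := if_pos (by rw [← ht₀def] at *; exact ht₀)
  have hczr : c * z₀ ^ 2 = βl * r ^ 2 := by rw [hz₀def, hβldef]; ring
  -- bound the error
  have herr : ‖Complex.I * τ * (((k : ℝ) ^ (-(1:ℝ)/3) : ℝ) : ℂ) * (κ : ℂ) * deriv W z₀
      + Complex.I * ((D : ℝ) : ℂ) * ((t₀ : ℝ) : ℂ) * (W z₀ - 1)
      + Complex.I * ((r : ℝ) : ℂ) * (κ : ℂ) * ((D * t₀ ^ 2 / 2 : ℝ) : ℂ) * deriv W z₀‖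
      ≤ A * r * Real.exp (-(βl * r ^ 2)) := by
    have e2 : ‖Complex.I * τ * (((k : ℝ) ^ (-(1:ℝ)/3) : ℝ) : ℂ) * (κ : ℂ) * deriv W z₀‖
        ≤ ‖τ‖ * κ * CW * Real.exp (-c * z₀ ^ 2) := by
      have n2 : ‖Complex.I * τ * (((k : ℝ) ^ (-(1:ℝ)/3) : ℝ) : ℂ) * (κ : ℂ) * deriv W z₀‖
          = ‖τ‖ * ((k:ℝ) ^ (-(1:ℝ)/3)) * κ * ‖deriv W z₀‖ := by
        simp only [norm_mul, Complex.norm_I, Complex.norm_real, Real.norm_eq_abs, one_mul,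
          abs_of_nonneg hρ0, abs_of_pos hκpos]
      rw [n2]
      calc ‖τ‖ * ((k:ℝ) ^ (-(1:ℝ)/3)) * κ * ‖deriv W z₀‖
          ≤ ‖τ‖ * 1 * κ * (CW * Real.exp (-c * z₀ ^ 2)) := by
            apply mul_le_mul _ (hW' z₀) (norm_nonneg _) (by positivity)
            apply mul_le_mul_of_nonneg_right _ hκpos.le
            exact mul_le_mul_of_nonneg_left hρ1 (norm_nonneg _)
        _ = ‖τ‖ * κ * CW * Real.exp (-c * z₀ ^ 2) := by ring
    have e3 : ‖Complex.I * ((D : ℝ) : ℂ) * ((t₀ : ℝ) : ℂ) * (W z₀ - 1)‖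
        ≤ |D| * t₀ * CW * Real.exp (-c * z₀ ^ 2) := by
      have n3 : ‖Complex.I * ((D : ℝ) : ℂ) * ((t₀ : ℝ) : ℂ) * (W z₀ - 1)‖
          = |D| * t₀ * ‖W z₀ - 1‖ := by
        simp only [norm_mul, Complex.norm_I, Complex.norm_real, Real.norm_eq_abs, one_mul,
          abs_of_pos ht₀]
      rw [n3, mul_assoc (|D| * t₀)]
      exact mul_le_mul_of_nonneg_left (hW1 z₀ hz₀pos.le) (by positivity)
    have e4 : ‖Complex.I * ((r : ℝ) : ℂ) * (κ : ℂ) * ((D * t₀ ^ 2 / 2 : ℝ) : ℂ) * deriv W z₀‖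
        ≤ κ * |D| * t₀ ^ 2 * CW / 2 * r * Real.exp (-c * z₀ ^ 2) := by
      have n4 : ‖Complex.I * ((r : ℝ) : ℂ) * (κ : ℂ) * ((D * t₀ ^ 2 / 2 : ℝ) : ℂ) * deriv W z₀‖
          = r * κ * (|D| * t₀ ^ 2 / 2) * ‖deriv W z₀‖ := by
        simp only [norm_mul, Complex.norm_I, Complex.norm_real, Real.norm_eq_abs, one_mul,
          abs_of_pos hrpos, abs_of_pos hκpos, abs_div, abs_mul, abs_pow, sq_abs, abs_two]
      rw [n4]
      calc r * κ * (|D| * t₀ ^ 2 / 2) * ‖deriv W z₀‖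
          ≤ r * κ * (|D| * t₀ ^ 2 / 2) * (CW * Real.exp (-c * z₀ ^ 2)) := by
            exact mul_le_mul_of_nonneg_left (hW' z₀) (by positivity)
        _ = κ * |D| * t₀ ^ 2 * CW / 2 * r * Real.exp (-c * z₀ ^ 2) := by ring
    calc ‖Complex.I * τ * (((k : ℝ) ^ (-(1:ℝ)/3) : ℝ) : ℂ) * (κ : ℂ) * deriv W z₀
        + Complex.I * ((D : ℝ) : ℂ) * ((t₀ : ℝ) : ℂ) * (W z₀ - 1)
        + Complex.I * ((r : ℝ) : ℂ) * (κ : ℂ) * ((D * t₀ ^ 2 / 2 : ℝ) : ℂ) * deriv W z₀‖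
        ≤ ‖Complex.I * τ * (((k : ℝ) ^ (-(1:ℝ)/3) : ℝ) : ℂ) * (κ : ℂ) * deriv W z₀
          + Complex.I * ((D : ℝ) : ℂ) * ((t₀ : ℝ) : ℂ) * (W z₀ - 1)‖
          + ‖Complex.I * ((r : ℝ) : ℂ) * (κ : ℂ) * ((D * t₀ ^ 2 / 2 : ℝ) : ℂ) * deriv W z₀‖ :=
          norm_add_le _ _
      _ ≤ (‖τ‖ * κ * CW * Real.exp (-c * z₀ ^ 2) + |D| * t₀ * CW * Real.exp (-c * z₀ ^ 2))
          + κ * |D| * t₀ ^ 2 * CW / 2 * r * Real.exp (-c * z₀ ^ 2) :=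
          add_le_add (le_trans (norm_add_le _ _) (add_le_add e2 e3)) e4
      _ ≤ A * r * Real.exp (-(βl * r ^ 2)) := by
          rw [show -(βl * r ^ 2) = -c * z₀ ^ 2 from by rw [← hczr]; ring]
          have hexp : (0:ℝ) < Real.exp (-c * z₀ ^ 2) := Real.exp_pos _
          have hcoef : ‖τ‖ * κ * CW + |D| * t₀ * CW + κ * |D| * t₀ ^ 2 * CW / 2 * r ≤ A * r := by
            have h1 : 0 ≤ ‖τ‖ * κ * CW := by positivity
            have h2 : 0 ≤ |D| * t₀ * CW := by positivity
            have hp := le_mul_of_one_le_right h1 hr1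
            have hq := le_mul_of_one_le_right h2 hr1
            have hexpand : A * r = ‖τ‖ * κ * CW * r + |D| * t₀ * CW * r
                + κ * |D| * t₀ ^ 2 * CW / 2 * r + r := by rw [hAdef]; ring
            rw [hexpand]
            linarith [hr1]
          calc ‖τ‖ * κ * CW * Real.exp (-c * z₀ ^ 2) + |D| * t₀ * CW * Real.exp (-c * z₀ ^ 2)
                + κ * |D| * t₀ ^ 2 * CW / 2 * r * Real.exp (-c * z₀ ^ 2)
              = (‖τ‖ * κ * CW + |D| * t₀ * CW + κ * |D| * t₀ ^ 2 * CW / 2 * r)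
                * Real.exp (-c * z₀ ^ 2) := by ring
            _ ≤ A * r * Real.exp (-c * z₀ ^ 2) :=
                mul_le_mul_of_nonneg_right hcoef hexp.le
  -- quantitative smallness of the error
  have herr2 : A * r * Real.exp (-(βl * r ^ 2)) ≤ ε / 2 := by
    have hub : Real.exp (-(βl * r ^ 2)) ≤ 4 / (βl * r ^ 2) ^ 2 :=
      exp_neg_le _ (by positivity)
    have hstep : A * r * (4 / (βl * r ^ 2) ^ 2) ≤ ε / 2 := by
      have hrw : A * r * (4 / (βl * r ^ 2) ^ 2) = 4 * A / (βl ^ 2 * r ^ 3) := by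
        field_simp
      rw [hrw]
      rw [div_le_div_iff₀ (by positivity) (by norm_num : (0:ℝ) < 2)]
      have hkr : 8 * A / (βl ^ 2 * ε) * 2 ≤ r ^ 3 := by
        rw [show r ^ (3:ℕ) = (k:ℝ) from hr3]
        exact le_trans hn hkn
      rw [div_mul_eq_mul_div, div_le_iff₀ (by positivity)] at hkr
      have hcomm : r ^ 3 * (βl ^ 2 * ε) = ε * (βl ^ 2 * r ^ 3) := by ring
      linarith [hA, hkr, hcomm.le, hcomm.ge]
    calc A * r * Real.exp (-(βl * r ^ 2)) ≤ A * r * (4 / (βl * r ^ 2) ^ 2) := by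
          exact mul_le_mul_of_nonneg_left hub (by positivity)
      _ ≤ ε / 2 := hstep
  -- value at y₀
  have hval : ε / 2 ≤ Real.exp (α * y₀) * ‖Uk k y₀‖ := by
    have hmain : ‖Complex.I * ((deriv Us y₀ : ℝ) : ℂ) * Heav (y₀ - a)‖ = ε := by
      rw [hHt₀]
      simp [Complex.norm_real, Real.norm_eq_abs, hεdef]
    have hdecomp : Uk k y₀ = Complex.I * ((deriv Us y₀ : ℝ) : ℂ) * Heav (y₀ - a)
        + (Complex.I * τ * (((k : ℝ) ^ (-(1:ℝ)/3) : ℝ) : ℂ) * (κ : ℂ) * deriv W z₀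
        + Complex.I * ((D : ℝ) : ℂ) * ((t₀ : ℝ) : ℂ) * (W z₀ - 1)
        + Complex.I * ((r : ℝ) : ℂ) * (κ : ℂ) * ((D * t₀ ^ 2 / 2 : ℝ) : ℂ) * deriv W z₀) := by
      rw [hUk k y₀, hHt₀, hz₀def, hrdef, ht₀def]
      ring
    have hlow : ε - ε / 2 ≤ ‖Uk k y₀‖ := by
      have htri := norm_add_le (Uk k y₀)
        (-(Complex.I * τ * (((k : ℝ) ^ (-(1:ℝ)/3) : ℝ) : ℂ) * (κ : ℂ) * deriv W z₀
        + Complex.I * ((D : ℝ) : ℂ) * ((t₀ : ℝ) : ℂ) * (W z₀ - 1)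
        + Complex.I * ((r : ℝ) : ℂ) * (κ : ℂ) * ((D * t₀ ^ 2 / 2 : ℝ) : ℂ) * deriv W z₀))
      rw [norm_neg] at htri
      have hcancel : Uk k y₀
          + -(Complex.I * τ * (((k : ℝ) ^ (-(1:ℝ)/3) : ℝ) : ℂ) * (κ : ℂ) * deriv W z₀
          + Complex.I * ((D : ℝ) : ℂ) * ((t₀ : ℝ) : ℂ) * (W z₀ - 1)
          + Complex.I * ((r : ℝ) : ℂ) * (κ : ℂ) * ((D * t₀ ^ 2 / 2 : ℝ) : ℂ) * deriv W z₀)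
          = Complex.I * ((deriv Us y₀ : ℝ) : ℂ) * Heav (y₀ - a) := by
        rw [hdecomp]; ring
      rw [hcancel, hmain] at htri
      linarith [le_trans herr herr2, htri]
    have hexp1 : (1:ℝ) ≤ Real.exp (α * y₀) := Real.one_le_exp (by positivity)
    calc ε / 2 = 1 * (ε - ε / 2) := by ring
      _ ≤ Real.exp (α * y₀) * ‖Uk k y₀‖ :=
        mul_le_mul hexp1 hlow (by linarith) (Real.exp_pos _).le
  -- conclude via the supremum
  have hbdd : BddAbove (Set.range fun y : {y : ℝ // 0 ≤ y} =>
      Real.exp (α * (y : ℝ)) * ‖Uk k (y : ℝ)‖) := by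
    refine ⟨C, ?_⟩
    rintro x ⟨y, rfl⟩
    exact key k hk1 y y.2
  exact le_trans hval (le_ciSup hbdd ⟨y₀, hy₀pos.le⟩)
end

section
/- Let E and F be normed vector spaces over ℂ, let σ₀ > σ > 0, c > 0 and C_R > 0 be real numbers, let k be a natural number with k ≥ 1, and set λ := k^{1/3} and T* := ln(k)/(3·(σ₀ − σ)·λ). Let T : ℝ → (F →L[ℂ] E) be a family of continuous linear operators, let x ∈ F with ‖x‖ ≤ 1, let g : ℝ → F and u : ℝ → E, and assume: (i) for every t ∈ [0, T*], the function s ↦ T(t − s)(g(s)) is Bochner integrable on [0, t] and u(t) = T(t)(x) + ∫₀ᵗ T(t − s)(g(s)) ds; (ii) ‖u(t)‖ ≥ c·e^{σ₀·λ·t} for every t ∈ [0, T*]; (iii) ‖g(s)‖ ≤ C_R·e^{σ₀·λ·s} for every s ∈ [0, T*]. Then there exists t ∈ [0, T*] such that e^{−σ·λ·t}·‖T(t)‖ > (c/2)·((σ₀ − σ)/((σ₀ − σ) + C_R))·λ, where ‖T(t)‖ denotes the operator norm. -/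
open MeasureTheory Real Set

/-! If `‖T τ‖ ≤ M e^{σλτ}` held on all of `[0, T*]`, the Duhamel formula would give
`‖u(T*)‖ ≤ M e^{σλT*} + M C_R e^{σ₀λT*} / ((σ₀ - σ)λ)`. The choice of `T*` makes
`e^{(σ₀ - σ)λT*} = λ`, and with the critical value of `M` the right-hand side is
`(c/2) e^{σ₀λT*}`, half of the assumed lower bound on `‖u(T*)‖`. -/

theorem integral_exp_mul {a : ℝ} (ha : a ≠ 0) (t : ℝ) :
    ∫ s in (0 : ℝ)..t, exp (a * s) = (exp (a * t) - 1) / a := by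
  rw [intervalIntegral.integral_comp_mul_left (fun y => exp y) ha, integral_exp, mul_zero,
    exp_zero, smul_eq_mul, inv_mul_eq_div]

theorem exp_mul_log_div_mul {a x : ℝ} (ha : a ≠ 0) (hx : 0 < x) (n : ℝ) :
    exp (a * (log x / (n * a))) = x ^ (1 / n) := by
  rw [rpow_def_of_pos hx]; field_simp

section Duhamel

variable {𝕜 E F : Type*} [NontriviallyNormedField 𝕜] [NormedAddCommGroup E] [NormedSpace 𝕜 E]
  [NormedSpace ℝ E] [NormedAddCommGroup F] [NormedSpace 𝕜 F]
  {T : ℝ → F →L[𝕜] E} {g : ℝ → F} {M C α β t : ℝ}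

theorem norm_integral_duhamel_le (hαβ : α < β) (ht : 0 ≤ t)
    (hT : ∀ τ ∈ Icc 0 t, ‖T τ‖ ≤ M * exp (α * τ))
    (hg : ∀ s ∈ Icc 0 t, ‖g s‖ ≤ C * exp (β * s)) :
    ‖∫ s in (0 : ℝ)..t, T (t - s) (g s)‖ ≤ M * C * exp (β * t) / (β - α) := by
  have hM : 0 ≤ M := by simpa using (norm_nonneg _).trans (hT 0 ⟨le_rfl, ht⟩)
  have hC : 0 ≤ C := by simpa using (norm_nonneg _).trans (hg 0 ⟨le_rfl, ht⟩)
  have hγ : 0 < β - α := sub_pos.2 hαβ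
  have hpointwise : ∀ s ∈ Ioc 0 t,
      ‖T (t - s) (g s)‖ ≤ M * C * exp (α * t) * exp ((β - α) * s) := fun s hs =>
    calc ‖T (t - s) (g s)‖ ≤ ‖T (t - s)‖ * ‖g s‖ := (T (t - s)).le_opNorm _
      _ ≤ M * exp (α * (t - s)) * (C * exp (β * s)) :=
        mul_le_mul (hT _ ⟨by linarith [hs.2], by linarith [hs.1]⟩) (hg _ (Ioc_subset_Icc_self hs))
          (norm_nonneg _) (by positivity)
      _ = M * C * exp (α * t) * exp ((β - α) * s) := by
        rw [mul_mul_mul_comm, ← exp_add, mul_assoc (M * C), ← exp_add]; ring_nf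
  calc ‖∫ s in (0 : ℝ)..t, T (t - s) (g s)‖
      ≤ ∫ s in (0 : ℝ)..t, M * C * exp (α * t) * exp ((β - α) * s) :=
        intervalIntegral.norm_integral_le_of_norm_le ht (Filter.Eventually.of_forall hpointwise)
          (Continuous.intervalIntegrable (by fun_prop) _ _)
    _ = M * C * (exp (β * t) - exp (α * t)) / (β - α) := by
        rw [intervalIntegral.integral_const_mul, integral_exp_mul hγ.ne',
          show β * t = α * t + (β - α) * t by ring, exp_add]
        ring
    _ ≤ M * C * exp (β * t) / (β - α) := by gcongr; linarith [exp_pos (α * t)]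

theorem norm_duhamel_le (x : F) (hαβ : α < β) (ht : 0 ≤ t)
    (hT : ∀ τ ∈ Icc 0 t, ‖T τ‖ ≤ M * exp (α * τ))
    (hg : ∀ s ∈ Icc 0 t, ‖g s‖ ≤ C * exp (β * s)) :
    ‖T t x + ∫ s in (0 : ℝ)..t, T (t - s) (g s)‖
      ≤ M * exp (α * t) * ‖x‖ + M * C * exp (β * t) / (β - α) :=
  (norm_add_le _ _).trans <| add_le_add
    ((T t).le_opNorm x |>.trans <| by gcongr; exact hT t ⟨ht, le_rfl⟩)
    (norm_integral_duhamel_le hαβ ht hT hg)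

end Duhamel

theorem stmt16_general {E F : Type*} [NormedAddCommGroup E] [NormedSpace ℂ E]
    [NormedAddCommGroup F] [NormedSpace ℂ F]
    (σ₀ σ c CR : ℝ) (hσ₀ : σ < σ₀) (hc : 0 < c) (hCR : 0 < CR)
    (k : ℕ) (hk : 1 ≤ k)
    (lam Tstar : ℝ) (hlam : lam = (k : ℝ) ^ ((1 : ℝ) / 3))
    (hTstar : Tstar = Real.log k / (3 * (σ₀ - σ) * lam))
    (T : ℝ → F →L[ℂ] E) (x : F) (hx : ‖x‖ ≤ 1)
    (g : ℝ → F) (u : ℝ → E)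
    (hDuhamel : ∀ t ∈ Set.Icc (0 : ℝ) Tstar,
      IntegrableOn (fun s => T (t - s) (g s)) (Set.Icc (0 : ℝ) t) ∧
      u t = T t x + ∫ s in (0 : ℝ)..t, T (t - s) (g s))
    (hgrow : ∀ t ∈ Set.Icc (0 : ℝ) Tstar, c * Real.exp (σ₀ * lam * t) ≤ ‖u t‖)
    (hg : ∀ s ∈ Set.Icc (0 : ℝ) Tstar, ‖g s‖ ≤ CR * Real.exp (σ₀ * lam * s)) :
    ∃ t ∈ Set.Icc (0 : ℝ) Tstar,
      c / 2 * ((σ₀ - σ) / ((σ₀ - σ) + CR)) * lam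
        < Real.exp (-σ * lam * t) * ‖T t‖ := by
  by_contra! hcon
  set M := c / 2 * ((σ₀ - σ) / ((σ₀ - σ) + CR)) * lam
  have hk₀ : (0 : ℝ) < k := by exact_mod_cast hk
  have hlam₀ : 0 < lam := hlam ▸ rpow_pos_of_pos hk₀ _
  have hδ : 0 < σ₀ - σ := sub_pos.2 hσ₀
  have hTstar₀ : 0 ≤ Tstar := hTstar ▸ div_nonneg (log_nonneg (by exact_mod_cast hk)) (by positivity)
  have hmem : Tstar ∈ Icc 0 Tstar := ⟨hTstar₀, le_rfl⟩
  have hexp : exp (σ₀ * lam * Tstar) = lam * exp (σ * lam * Tstar) := by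
    have hgap : exp ((σ₀ - σ) * lam * Tstar) = lam := by
      rw [hTstar, mul_assoc 3, exp_mul_log_div_mul (by positivity) hk₀, hlam]
    rw [show σ₀ * lam * Tstar = (σ₀ - σ) * lam * Tstar + σ * lam * Tstar by ring, exp_add, hgap]
  have hT : ∀ τ ∈ Icc 0 Tstar, ‖T τ‖ ≤ M * exp (σ * lam * τ) := fun τ hτ => by
    have := hcon τ hτ
    rwa [neg_mul, neg_mul, exp_neg, inv_mul_le_iff₀ (exp_pos _), mul_comm] at this
  have hupper := (hDuhamel Tstar hmem).2 ▸
    norm_duhamel_le x (mul_lt_mul_of_pos_right hσ₀ hlam₀) hTstar₀ hT hg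
  have hlower := hgrow Tstar hmem
  rw [hexp] at hupper hlower
  set e := exp (σ * lam * Tstar)
  have hcritical : M * e * ‖x‖ + M * CR * (lam * e) / (σ₀ * lam - σ * lam) ≤ c / 2 * (lam * e) :=
    calc _ ≤ M * e + M * CR * (lam * e) / (σ₀ * lam - σ * lam) := by
          gcongr ?_ + _; exact mul_le_of_le_one_right (by positivity) hx
      _ = c / 2 * (lam * e) := by
          rw [← sub_mul]; simp only [M]; field_simp
  linarith [mul_pos hc (mul_pos hlam₀ (exp_pos (σ * lam * Tstar)))]

/-- The abstract content of Lemma 2.3 of the paper: a Duhamel identity together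
with exponential growth of the forced solution and an exponential bound on the
forcing imply a lower bound on the weighted operator norm of the solution
family on a time interval of length `ln k / (3 (σ₀ - σ) k^{1/3})`. -/
theorem stmt16 {E F : Type*} [NormedAddCommGroup E] [NormedSpace ℂ E]
    [NormedAddCommGroup F] [NormedSpace ℂ F]
    (σ₀ σ c CR : ℝ) (hσ : 0 < σ) (hσ₀ : σ < σ₀) (hc : 0 < c) (hCR : 0 < CR)
    (k : ℕ) (hk : 1 ≤ k)
    (lam Tstar : ℝ) (hlam : lam = (k : ℝ) ^ ((1 : ℝ) / 3))
    (hTstar : Tstar = Real.log k / (3 * (σ₀ - σ) * lam))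
    (T : ℝ → F →L[ℂ] E) (x : F) (hx : ‖x‖ ≤ 1)
    (g : ℝ → F) (u : ℝ → E)
    (hDuhamel : ∀ t ∈ Set.Icc (0 : ℝ) Tstar,
      IntegrableOn (fun s => T (t - s) (g s)) (Set.Icc (0 : ℝ) t) ∧
      u t = T t x + ∫ s in (0 : ℝ)..t, T (t - s) (g s))
    (hgrow : ∀ t ∈ Set.Icc (0 : ℝ) Tstar, c * Real.exp (σ₀ * lam * t) ≤ ‖u t‖)
    (hg : ∀ s ∈ Set.Icc (0 : ℝ) Tstar, ‖g s‖ ≤ CR * Real.exp (σ₀ * lam * s)) :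
    ∃ t ∈ Set.Icc (0 : ℝ) Tstar,
      c / 2 * ((σ₀ - σ) / ((σ₀ - σ) + CR)) * lam
        < Real.exp (-σ * lam * t) * ‖T t‖ :=
  stmt16_general σ₀ σ c CR hσ₀ hc hCR k hk lam Tstar hlam hTstar T x hx g u hDuhamel hgrow hg
end

section
/- Let α > 0, a > 0, τ ∈ ℂ, and let U_s : [0, ∞) → ℝ be four times continuously differentiable with U_s'(a) = 0, U_s''(a) ≠ 0, and sup_{y ≥ 0} e^{α·y}·|U_s^{(j)}(y)| < ∞ for j = 0, 1, 2, 3, 4; set κ := (|U_s''(a)|/2)^{1/4}. Let W : ℝ → ℂ be differentiable with constants C_W > 0, c > 0 such that |W(z) − 1| ≤ C_W·e^{−c·z²} for z ≥ 0, |W(z)| ≤ C_W·e^{−c·z²} for z < 0, and |W'(z)| ≤ C_W·e^{−c·z²} for all z ∈ ℝ. For each natural number k ≥ 1 define F_{1,k}(y) := ( U_s(y) − U_s(a) − (U_s''(a)/2)·(y−a)² )·U_s''(a)·(y−a) − ( U_s'(y) − U_s''(a)·(y−a) )·( τ·k^{−1/2} + (U_s''(a)/2)·(y−a)² ), F_{2,k}(y)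 := ( U_s(y) − U_s(a) − (U_s''(a)/2)·(y−a)² )·( τ·k^{−1/2} + (U_s''(a)/2)·(y−a)² ), and ℛ_k(y) := i·k^{−1}·H(y−a)·U_s'''(y) + F_{1,k}(y)·( W(κ·k^{1/4}·(y−a)) − H(y−a) ) + F_{2,k}(y)·W'(κ·k^{1/4}·(y−a)). Then there exists a constant C_R > 0 such that for every natural number k ≥ 1, k·sup_{y ≥ 0} e^{α·y}·|ℛ_k(y)| ≤ C_R. -/
open Real Set

theorem abs_sub_le_mul_abs_pow_succ {f f' : ℝ → ℝ} {s : Set ℝ} {a y C : ℝ} {n : ℕ}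
    (hs : Convex ℝ s) (ha : a ∈ s) (hy : y ∈ s) (hf : ∀ x ∈ s, HasDerivAt f (f' x) x)
    (hC : 0 ≤ C) (hf' : ∀ x ∈ s, |f' x| ≤ C * |x - a| ^ n) :
    |f y - f a| ≤ C * |y - a| ^ (n + 1) := by
  have hseg : uIcc a y ⊆ s := segment_eq_uIcc a y ▸ hs.segment_subset ha hy
  have := Convex.norm_image_sub_le_of_norm_hasDerivWithin_le (C := C * |y - a| ^ n)
    (fun x hx => (hf x (hseg hx)).hasDerivWithinAt)
    (fun x hx => (hf' x (hseg hx)).trans <| mul_le_mul_of_nonneg_left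
      (pow_le_pow_left₀ (abs_nonneg _) (abs_sub_left_of_mem_uIcc hx) n) hC)
    (convex_uIcc a y) left_mem_uIcc right_mem_uIcc
  simpa only [Real.norm_eq_abs, pow_succ, mul_assoc] using this

theorem taylor_bounds_of_abs_iteratedDeriv_three_le {f : ℝ → ℝ} (hf : ContDiff ℝ 3 f)
    {s : Set ℝ} {a M y : ℝ} (hs : Convex ℝ s) (ha : a ∈ s) (hy : y ∈ s) (hfa : deriv f a = 0)
    (hM : ∀ x ∈ s, |iteratedDeriv 3 f x| ≤ M) :
    |deriv f y - deriv (deriv f) a * (y - a)| ≤ M * |y - a| ^ 2 ∧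
      |f y - f a - deriv (deriv f) a / 2 * (y - a) ^ 2| ≤ M * |y - a| ^ 3 := by
  set b := deriv (deriv f) a
  have hM0 : 0 ≤ M := (abs_nonneg _).trans (hM a ha)
  have hf1 : Differentiable ℝ f := hf.differentiable (by norm_num)
  have hf2 : Differentiable ℝ (deriv f) := by
    simpa [iteratedDeriv_one] using hf.differentiable_iteratedDeriv 1 (by norm_num)
  have hf3 : Differentiable ℝ (deriv (deriv f)) := by
    simpa [iteratedDeriv_succ] using hf.differentiable_iteratedDeriv 2 (by norm_num)
  have h3 : deriv (deriv (deriv f)) = iteratedDeriv 3 f := by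
    simp only [iteratedDeriv_succ, iteratedDeriv_zero]
  have h2 : ∀ x ∈ s, |deriv (deriv f) x - b| ≤ M * |x - a| ^ 1 := fun x hx =>
    abs_sub_le_mul_abs_pow_succ hs ha hx (fun z _ => (hf3 z).hasDerivAt) hM0
      (fun z hz => by simpa [h3] using hM z hz)
  have h1 : ∀ x ∈ s, |deriv f x - b * (x - a)| ≤ M * |x - a| ^ 2 := fun x hx => by
    simpa [hfa] using abs_sub_le_mul_abs_pow_succ (n := 1) (f := fun x => deriv f x - b * (x - a))
      hs ha hx (fun z _ => ((hf2 z).hasDerivAt.sub (((hasDerivAt_id z).sub_const a).const_mul b)))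
      hM0 (fun z hz => by simpa using h2 z hz)
  refine ⟨h1 y hy, ?_⟩
  have := abs_sub_le_mul_abs_pow_succ (f := fun x => f x - b / 2 * (x - a) ^ 2)
      hs ha hy (fun z _ => ((hf1 z).hasDerivAt.sub
        ((((hasDerivAt_id z).sub_const a).pow 2).const_mul (b / 2))))
      hM0 (fun z hz => by convert h1 z hz using 3; simp; ring)
  simpa [sub_right_comm] using this

theorem norm_heav_le_one (z : ℝ) : ‖Heav z‖ ≤ 1 := by
  unfold Heav; split_ifs <;> simp

theorem heav_mul_of_pos {p : ℝ} (hp : 0 < p) (z : ℝ) : Heav (p * z) = Heav z := by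
  simp only [Heav, mul_pos_iff_of_pos_left hp]

theorem norm_sub_heav_le {W : ℝ → ℂ} {CW c : ℝ}
    (hW1 : ∀ z : ℝ, 0 ≤ z → ‖W z - 1‖ ≤ CW * exp (-c * z ^ 2))
    (hW0 : ∀ z : ℝ, z < 0 → ‖W z‖ ≤ CW * exp (-c * z ^ 2)) (z : ℝ) :
    ‖W z - Heav z‖ ≤ (CW + 1) * exp (-c * z ^ 2) := by
  have hmono : CW * exp (-c * z ^ 2) ≤ (CW + 1) * exp (-c * z ^ 2) :=
    mul_le_mul_of_nonneg_right (by linarith) (exp_pos _).le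
  rcases lt_trichotomy z 0 with hz | rfl | hz
  · simpa [Heav, hz.not_gt] using (hW0 z hz).trans hmono
  · have h := hW1 0 le_rfl
    have h' := norm_le_norm_sub_add (W 0) 1
    simp only [Heav, lt_irrefl, if_false, sub_zero, norm_one] at h h' ⊢
    norm_num at h ⊢
    linarith
  · simpa [Heav, hz] using (hW1 z hz.le).trans hmono

theorem pow_mul_exp_neg_mul_le {γ x : ℝ} (hγ : 0 < γ) (hx : 0 ≤ x) (n : ℕ) :
    x ^ n * exp (-(γ * x)) ≤ n.factorial / γ ^ n := by
  have h := pow_div_factorial_le_exp (γ * x) (by positivity) n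
  rw [exp_neg, ← div_eq_mul_inv, div_le_div_iff₀ (exp_pos _) (by positivity)]
  rw [div_le_iff₀ (by positivity), mul_pow] at h
  linarith

theorem mul_sub_mul_sq_le {β γ t : ℝ} (hγ : 0 < γ) : β * t - γ * t ^ 2 ≤ β ^ 2 / (4 * γ) := by
  rw [le_div_iff₀ (by positivity)]
  nlinarith [sq_nonneg (2 * γ * t - β)]

theorem exists_forall_poly_mul_exp_mul_gaussian_le (α a : ℝ) {γ A B : ℝ} (hγ : 0 < γ)
    (hA : 0 ≤ A) (hB : 0 ≤ B) :
    ∃ D, ∀ y q : ℝ, 1 ≤ q →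
      (A * (q * (y - a) ^ 2) + B * (q * (y - a) ^ 2) ^ 2) * (1 + |y - a|) * exp (α * y) *
        exp (-(γ * (q * (y - a) ^ 2))) ≤ D := by
  refine ⟨(A * (2 / γ) + B * (8 / γ ^ 2)) * (exp (α * a) * exp ((|α| + 1) ^ 2 / (2 * γ))),
    fun y q hq => ?_⟩
  set t := |y - a|
  set S := q * (y - a) ^ 2
  have hS : t ^ 2 ≤ S := by
    rw [sq_abs]; exact le_mul_of_one_le_left (sq_nonneg _) hq
  have hS0 : 0 ≤ S := (sq_nonneg t).trans hS
  have hγ2 : 0 < γ / 2 := half_pos hγ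
  have hpoly : (A * S + B * S ^ 2) * exp (-(γ / 2 * S)) ≤ A * (2 / γ) + B * (8 / γ ^ 2) := by
    have h1 := pow_mul_exp_neg_mul_le hγ2 hS0 1
    have h2 := pow_mul_exp_neg_mul_le hγ2 hS0 2
    norm_num [Nat.factorial] at h1 h2
    calc (A * S + B * S ^ 2) * exp (-(γ / 2 * S))
        = A * (S * exp (-(γ / 2 * S))) + B * (S ^ 2 * exp (-(γ / 2 * S))) := by ring
      _ ≤ A * (2 / γ) + B * (8 / γ ^ 2) := by
        rw [show 8 / γ ^ 2 = 2 / (γ / 2) ^ 2 by ring]; gcongr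
  have hgauss : (1 + t) * exp (α * y) * exp (-(γ / 2 * S)) ≤
      exp (α * a) * exp ((|α| + 1) ^ 2 / (2 * γ)) :=
    calc (1 + t) * exp (α * y) * exp (-(γ / 2 * S))
        ≤ exp t * (exp (α * a) * exp (|α| * t)) * exp (-(γ / 2 * t ^ 2)) := by
          rw [← exp_add]
          gcongr
          · linarith [add_one_le_exp t]
          · have : α * (y - a) ≤ |α| * t := by rw [← abs_mul]; exact le_abs_self _
            linarith
      _ = exp (α * a) * exp ((|α| + 1) * t - γ / 2 * t ^ 2) := by
          simp only [← exp_add]; ring_nf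
      _ ≤ exp (α * a) * exp ((|α| + 1) ^ 2 / (2 * γ)) := by
          gcongr; exact (mul_sub_mul_sq_le hγ2).trans_eq (by ring)
  calc (A * S + B * S ^ 2) * (1 + t) * exp (α * y) * exp (-(γ * S))
      = ((A * S + B * S ^ 2) * exp (-(γ / 2 * S))) *
          ((1 + t) * exp (α * y) * exp (-(γ / 2 * S))) := by
        rw [show -(γ * S) = -(γ / 2 * S) + -(γ / 2 * S) by ring, exp_add]; ring
    _ ≤ _ := mul_le_mul hpoly hgauss (by positivity) (by positivity)

theorem rpow_neg_one_div_two {x : ℝ} (hx : 0 ≤ x) : x ^ (-(1 : ℝ) / 2) = (√x)⁻¹ := by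
  rw [neg_div, rpow_neg hx, sqrt_eq_rpow]

theorem sq_rpow_one_div_four {x : ℝ} (hx : 0 ≤ x) : (x ^ ((1 : ℝ) / 4)) ^ 2 = √x := by
  rw [← rpow_natCast, ← rpow_mul hx, sqrt_eq_rpow]; norm_num

theorem norm_ofReal_mul_add_le (τ : ℂ) (s v : ℝ) (hs : 0 ≤ s) :
    ‖τ * (s : ℂ) + (v : ℂ)‖ ≤ ‖τ‖ * s + |v| := by
  simpa [abs_of_nonneg hs] using norm_add_le (τ * (s : ℂ)) (v : ℂ)

-- With `q = √k` and `u = y - a`, the two norms are `‖F_{1,k} y‖` and `‖F_{2,k} y‖`.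
theorem sq_mul_norm_F_sum_le {τ : ℂ} {g₀ g₁ b u M q : ℝ} (hq : 0 < q) (hM : 0 ≤ M)
    (hg₀ : |g₀| ≤ M * |u| ^ 3) (hg₁ : |g₁| ≤ M * |u| ^ 2) :
    q ^ 2 * (‖(g₀ : ℂ) * b * u - g₁ * (τ * (q⁻¹ : ℝ) + (b / 2 * u ^ 2 : ℝ))‖
        + ‖(g₀ : ℂ) * (τ * (q⁻¹ : ℝ) + (b / 2 * u ^ 2 : ℝ))‖)
      ≤ M * (‖τ‖ * (q * u ^ 2) + 2 * |b| * (q * u ^ 2) ^ 2) * (1 + |u|) := by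
  set T : ℝ := ‖τ‖ * q⁻¹ + |b| / 2 * u ^ 2
  have hT : ‖τ * (q⁻¹ : ℝ) + (b / 2 * u ^ 2 : ℝ)‖ ≤ T := by
    have := norm_ofReal_mul_add_le τ q⁻¹ (b / 2 * u ^ 2) (inv_nonneg.mpr hq.le)
    simpa [T, abs_mul, abs_div, abs_of_nonneg (sq_nonneg u)] using this
  have hT0 : 0 ≤ T := by positivity
  have hnorms : ‖(g₀ : ℂ) * b * u - g₁ * (τ * (q⁻¹ : ℝ) + (b / 2 * u ^ 2 : ℝ))‖
        + ‖(g₀ : ℂ) * (τ * (q⁻¹ : ℝ) + (b / 2 * u ^ 2 : ℝ))‖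
      ≤ M * |u| ^ 3 * |b| * |u| + (M * |u| ^ 2 + M * |u| ^ 3) * T := by
    refine (add_le_add_left (norm_sub_le _ _) _).trans ?_
    simp only [norm_mul, Complex.norm_real, Real.norm_eq_abs]
    have : |g₁| * ‖τ * (q⁻¹ : ℝ) + (b / 2 * u ^ 2 : ℝ)‖ ≤ M * |u| ^ 2 * T := by gcongr
    have : |g₀| * ‖τ * (q⁻¹ : ℝ) + (b / 2 * u ^ 2 : ℝ)‖ ≤ M * |u| ^ 3 * T := by gcongr
    have : |g₀| * |b| * |u| ≤ M * |u| ^ 3 * |b| * |u| := by gcongr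
    linarith
  calc _ ≤ q ^ 2 * (M * |u| ^ 3 * |b| * |u| + (M * |u| ^ 2 + M * |u| ^ 3) * T) := by gcongr
    _ = M * (|b| * (q * u ^ 2) ^ 2
          + (1 + |u|) * (‖τ‖ * (q * u ^ 2) + |b| / 2 * (q * u ^ 2) ^ 2)) := by
      simp only [T]; rw [← sq_abs u]; field_simp
    _ ≤ _ := by
      have h₀ : 0 ≤ M * (|b| * (q * u ^ 2) ^ 2) := by positivity
      have h₁ : 0 ≤ M * |u| * (|b| * (q * u ^ 2) ^ 2) := by positivity
      linear_combination (1 / 2) * h₀ + (3 / 2) * h₁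

theorem mul_norm_remainder_le {k G h₃ : ℝ} {H w w' F₁ F₂ : ℂ} (hk : 0 < k) (hH : ‖H‖ ≤ 1)
    (hw : ‖w - H‖ ≤ G) (hw' : ‖w'‖ ≤ G) :
    k * ‖Complex.I * ((k ^ (-(1 : ℝ)) : ℝ) : ℂ) * H * (h₃ : ℂ) + F₁ * (w - H) + F₂ * w'‖
      ≤ |h₃| + G * (k * (‖F₁‖ + ‖F₂‖)) := by
  have hI : k * ‖Complex.I * ((k ^ (-(1 : ℝ)) : ℝ) : ℂ) * H * (h₃ : ℂ)‖ ≤ |h₃| := by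
    rw [norm_mul, norm_mul, norm_mul, Complex.norm_I, Complex.norm_real, Complex.norm_real,
      Real.norm_eq_abs, Real.norm_eq_abs, rpow_neg_one, abs_inv, abs_of_pos hk, one_mul,
      show k * (k⁻¹ * ‖H‖ * |h₃|) = ‖H‖ * |h₃| by field_simp]
    exact mul_le_of_le_one_left (abs_nonneg _) hH
  have h₁ : ‖F₁ * (w - H)‖ ≤ ‖F₁‖ * G := by rw [norm_mul]; gcongr
  have h₂ : ‖F₂ * w'‖ ≤ ‖F₂‖ * G := by rw [norm_mul]; gcongr
  calc _ ≤ k * (‖Complex.I * ((k ^ (-(1 : ℝ)) : ℝ) : ℂ) * H * (h₃ : ℂ)‖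
        + ‖F₁ * (w - H)‖ + ‖F₂ * w'‖) := by gcongr; exact norm_add₃_le
    _ ≤ _ := by nlinarith

theorem stmt18_general (α a : ℝ) (hα : 0 < α) (ha : 0 < a) (τ : ℂ)
    (Us : ℝ → ℝ) (hUs : ContDiff ℝ 4 Us)
    (hUsa' : deriv Us a = 0)
    (b : ℝ) (hb : b = deriv (deriv Us) a) (hb0 : b ≠ 0)
    (hUsbd : ∀ j : ℕ, j ≤ 4 → ∃ M : ℝ, ∀ y : ℝ, 0 ≤ y →
      Real.exp (α * y) * |iteratedDeriv j Us y| ≤ M)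
    (κ : ℝ) (hκ : κ = (|b| / 2) ^ ((1 : ℝ) / 4))
    (W : ℝ → ℂ)
    (CW c : ℝ) (hCW : 0 < CW) (hc : 0 < c)
    (hW1 : ∀ z : ℝ, 0 ≤ z → ‖W z - 1‖ ≤ CW * Real.exp (-c * z ^ 2))
    (hW0 : ∀ z : ℝ, z < 0 → ‖W z‖ ≤ CW * Real.exp (-c * z ^ 2))
    (hW' : ∀ z : ℝ, ‖deriv W z‖ ≤ CW * Real.exp (-c * z ^ 2))
    (F1 F2 R : ℕ → ℝ → ℂ)
    (hF1 : ∀ (k : ℕ) (y : ℝ), F1 k y =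
      ((Us y - Us a - b / 2 * (y - a) ^ 2 : ℝ) : ℂ) * (b : ℂ) * ((y - a : ℝ) : ℂ)
        - ((deriv Us y - b * (y - a) : ℝ) : ℂ) *
            (τ * (((k : ℝ) ^ (-(1 : ℝ) / 2) : ℝ) : ℂ)
              + ((b / 2 * (y - a) ^ 2 : ℝ) : ℂ)))
    (hF2 : ∀ (k : ℕ) (y : ℝ), F2 k y =
      ((Us y - Us a - b / 2 * (y - a) ^ 2 : ℝ) : ℂ) *
        (τ * (((k : ℝ) ^ (-(1 : ℝ) / 2) : ℝ) : ℂ)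
          + ((b / 2 * (y - a) ^ 2 : ℝ) : ℂ)))
    (hR : ∀ (k : ℕ) (y : ℝ), R k y =
      Complex.I * (((k : ℝ) ^ (-(1 : ℝ)) : ℝ) : ℂ) * Heav (y - a) *
          ((iteratedDeriv 3 Us y : ℝ) : ℂ)
        + F1 k y * (W (κ * (k : ℝ) ^ ((1 : ℝ) / 4) * (y - a)) - Heav (y - a))
        + F2 k y * deriv W (κ * (k : ℝ) ^ ((1 : ℝ) / 4) * (y - a))) :
    ∃ CR : ℝ, 0 < CR ∧ ∀ (k : ℕ), 1 ≤ k → ∀ y : ℝ, 0 ≤ y →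
      (k : ℝ) * (Real.exp (α * y) * ‖R k y‖) ≤ CR := by
  obtain ⟨M, hM⟩ := hUsbd 3 (by norm_num)
  have hU₃ : ∀ x ∈ Ici (0 : ℝ), |iteratedDeriv 3 Us x| ≤ M := fun x hx =>
    (le_mul_of_one_le_left (abs_nonneg _) (one_le_exp (mul_nonneg hα.le hx))).trans (hM x hx)
  have hM0 : 0 ≤ M := (abs_nonneg _).trans (hU₃ 0 (mem_Ici.mpr le_rfl))
  have hκ0 : 0 < κ := hκ ▸ rpow_pos_of_pos (by positivity) _
  obtain ⟨D, hD⟩ := exists_forall_poly_mul_exp_mul_gaussian_le α a (γ := c * κ ^ 2)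
    (by positivity) (norm_nonneg τ) (by positivity : 0 ≤ 2 * |b|)
  refine ⟨max (M + (CW + 1) * M * D) 1, by positivity, fun k hk y hy => ?_⟩
  obtain ⟨hg₁, hg₀⟩ := taylor_bounds_of_abs_iteratedDeriv_three_le (hUs.of_le (by norm_num))
    (convex_Ici 0) ha.le hy hUsa' hU₃
  rw [← hb] at hg₁ hg₀
  have hk0 : (0 : ℝ) < k := by exact_mod_cast hk
  set z := κ * (k : ℝ) ^ ((1 : ℝ) / 4) * (y - a)
  set S := √(k : ℝ) * (y - a) ^ 2
  have hz : c * z ^ 2 = c * κ ^ 2 * S := by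
    rw [mul_pow, mul_pow, sq_rpow_one_div_four hk0.le]; ring
  have hkR : k * ‖R k y‖ ≤
      |iteratedDeriv 3 Us y| + (CW + 1) * exp (-c * z ^ 2) * (k * (‖F1 k y‖ + ‖F2 k y‖)) := by
    rw [hR, ← heav_mul_of_pos (by positivity : 0 < κ * (k : ℝ) ^ ((1 : ℝ) / 4)) (y - a)]
    exact mul_norm_remainder_le hk0 (norm_heav_le_one _) (norm_sub_heav_le hW1 hW0 z)
      ((hW' z).trans (mul_le_mul_of_nonneg_right (by linarith) (exp_pos _).le))
  have hkF : k * (‖F1 k y‖ + ‖F2 k y‖) ≤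
      M * (‖τ‖ * S + 2 * |b| * S ^ 2) * (1 + |y - a|) := by
    have := sq_mul_norm_F_sum_le (τ := τ) (b := b) (sqrt_pos.mpr hk0) hM0 hg₀ hg₁
    rwa [sq_sqrt hk0.le, ← rpow_neg_one_div_two hk0.le, ← hF1, ← hF2] at this
  calc (k : ℝ) * (exp (α * y) * ‖R k y‖) = exp (α * y) * (k * ‖R k y‖) := by ring
    _ ≤ exp (α * y) * (|iteratedDeriv 3 Us y| + (CW + 1) * exp (-c * z ^ 2) *
          (M * (‖τ‖ * S + 2 * |b| * S ^ 2) * (1 + |y - a|))) := by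
      gcongr; exact hkR.trans (by gcongr)
    _ = exp (α * y) * |iteratedDeriv 3 Us y| + (CW + 1) * M * ((‖τ‖ * S + 2 * |b| * S ^ 2) *
          (1 + |y - a|) * exp (α * y) * exp (-(c * κ ^ 2 * S))) := by
      rw [← hz, ← neg_mul]; ring
    _ ≤ M + (CW + 1) * M * D := by
      gcongr
      exacts [hM y hy, hD y _ (one_le_sqrt.mpr (by exact_mod_cast hk))]
    _ ≤ _ := le_max_left _ _

/-- The uniform remainder bound `k ‖ℛ_k‖ ≤ C_R` of Proposition A.1 of the paper
for the explicit Prandtl remainders (A.5)–(A.7). -/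
theorem stmt18 (α a : ℝ) (hα : 0 < α) (ha : 0 < a) (τ : ℂ)
    (Us : ℝ → ℝ) (hUs : ContDiff ℝ 4 Us)
    (hUsa' : deriv Us a = 0)
    (b : ℝ) (hb : b = deriv (deriv Us) a) (hb0 : b ≠ 0)
    (hUsbd : ∀ j : ℕ, j ≤ 4 → ∃ M : ℝ, ∀ y : ℝ, 0 ≤ y →
      Real.exp (α * y) * |iteratedDeriv j Us y| ≤ M)
    (κ : ℝ) (hκ : κ = (|b| / 2) ^ ((1 : ℝ) / 4))
    (W : ℝ → ℂ) (hW : Differentiable ℝ W)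
    (CW c : ℝ) (hCW : 0 < CW) (hc : 0 < c)
    (hW1 : ∀ z : ℝ, 0 ≤ z → ‖W z - 1‖ ≤ CW * Real.exp (-c * z ^ 2))
    (hW0 : ∀ z : ℝ, z < 0 → ‖W z‖ ≤ CW * Real.exp (-c * z ^ 2))
    (hW' : ∀ z : ℝ, ‖deriv W z‖ ≤ CW * Real.exp (-c * z ^ 2))
    (F1 F2 R : ℕ → ℝ → ℂ)
    (hF1 : ∀ (k : ℕ) (y : ℝ), F1 k y =
      ((Us y - Us a - b / 2 * (y - a) ^ 2 : ℝ) : ℂ) * (b : ℂ) * ((y - a : ℝ) : ℂ)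
        - ((deriv Us y - b * (y - a) : ℝ) : ℂ) *
            (τ * (((k : ℝ) ^ (-(1 : ℝ) / 2) : ℝ) : ℂ)
              + ((b / 2 * (y - a) ^ 2 : ℝ) : ℂ)))
    (hF2 : ∀ (k : ℕ) (y : ℝ), F2 k y =
      ((Us y - Us a - b / 2 * (y - a) ^ 2 : ℝ) : ℂ) *
        (τ * (((k : ℝ) ^ (-(1 : ℝ) / 2) : ℝ) : ℂ)
          + ((b / 2 * (y - a) ^ 2 : ℝ) : ℂ)))
    (hR : ∀ (k : ℕ) (y : ℝ), R k y =
      Complex.I * (((k : ℝ) ^ (-(1 : ℝ)) : ℝ) : ℂ) * Heav (y - a) *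
          ((iteratedDeriv 3 Us y : ℝ) : ℂ)
        + F1 k y * (W (κ * (k : ℝ) ^ ((1 : ℝ) / 4) * (y - a)) - Heav (y - a))
        + F2 k y * deriv W (κ * (k : ℝ) ^ ((1 : ℝ) / 4) * (y - a))) :
    ∃ CR : ℝ, 0 < CR ∧ ∀ (k : ℕ), 1 ≤ k → ∀ y : ℝ, 0 ≤ y →
      (k : ℝ) * (Real.exp (α * y) * ‖R k y‖) ≤ CR :=
  stmt18_general α a hα ha τ Us hUs hUsa' b hb hb0 hUsbd κ hκ W CW c hCW hc hW1 hW0 hW' F1 F2 R hF1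
    hF2 hR
end

section
/- Let a > 0 and let U_s : (0, ∞) → ℝ be continuously differentiable with U_s(a) = 0. Then for every smooth function φ : ℝ → ℝ whose support is a compact subset of (0, ∞), one has ∫_a^∞ ( U_s(y)²·φ'(y) + 2·U_s(y)·U_s'(y)·φ(y) ) dy = 0; equivalently, the function v_a(y) := H(y − a)·U_s(y) satisfies U_s·v_a' − U_s'·v_a = 0 in the sense of distributions on (0, ∞). -/
open MeasureTheory Set Filter

/-- Section 3 of the paper: `v_a(y) = H(y - a) U_s(y)` is a weak solution of
`U_s v' - U_s' v = 0` on `(0, ∞)`; equivalently, for every test function `φ`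
compactly supported in `(0, ∞)`,
`∫_a^∞ (U_s(y)² φ'(y) + 2 U_s(y) U_s'(y) φ(y)) dy = 0`. -/
theorem stmt19 (a : ℝ) (ha : 0 < a) (Us : ℝ → ℝ)
    (hUs : ContDiffOn ℝ 1 Us (Set.Ioi 0)) (hUsa : Us a = 0) :
    ∀ φ : ℝ → ℝ, ContDiff ℝ (⊤ : ℕ∞) φ → HasCompactSupport φ →
      tsupport φ ⊆ Set.Ioi 0 →
      ∫ y in Set.Ioi a,
        (Us y ^ 2 * deriv φ y + 2 * Us y * deriv Us y * φ y) = 0 := by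
  intro φ hφ hφc hφs
  set f : ℝ → ℝ := fun y => Us y ^ 2 * φ y with hf
  set f' : ℝ → ℝ := fun y => Us y ^ 2 * deriv φ y + 2 * Us y * deriv Us y * φ y with hf'
  have hopen : IsOpen (Set.Ioi (0:ℝ)) := isOpen_Ioi
  have hUsdiff : ∀ x ∈ Set.Ioi (0:ℝ), HasDerivAt Us (deriv Us x) x := by
    intro x hx
    have : DifferentiableOn ℝ Us (Set.Ioi 0) := hUs.differentiableOn one_ne_zero
    exact ((this x hx).differentiableAt (hopen.mem_nhds hx)).hasDerivAt
  have hUscont : ContinuousOn Us (Set.Ioi 0) := hUs.continuousOn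
  have hderivUscont : ContinuousOn (deriv Us) (Set.Ioi 0) := by
    have := hUs.continuousOn_derivWithin hopen.uniqueDiffOn le_rfl
    refine this.congr ?_
    intro x hx
    exact (derivWithin_of_isOpen hopen hx).symm
  -- derivative
  have hderiv : ∀ x ∈ Set.Ioi a, HasDerivAt f (f' x) x := by
    intro x hx
    have hx0 : x ∈ Set.Ioi (0:ℝ) := lt_trans ha hx
    have h1 := (hUsdiff x hx0).fun_pow 2
    have h2 := (hφ.differentiable (by simp) x).hasDerivAt
    have := h1.fun_mul h2
    refine this.congr_deriv ?_
    simp only [hf']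
    norm_num
    ring
  -- f' has support inside tsupport φ
  have hsupp : Function.support f' ⊆ tsupport φ := by
    intro x hx
    by_contra h
    have hφx : φ x = 0 := image_eq_zero_of_notMem_tsupport h
    have hdφx : deriv φ x = 0 := by
      have : x ∉ tsupport (deriv φ) :=
        fun hmem => h (closure_minimal support_deriv_subset hφc.isCompact.isClosed hmem)
      exact image_eq_zero_of_notMem_tsupport this
    apply hx
    simp [hf', hφx, hdφx]
  -- continuity of f' on Ioi 0
  have hf'cont : ContinuousOn f' (Set.Ioi 0) := by
    apply ContinuousOn.add
    · exact (hUscont.pow 2).mul ((hφ.continuous_deriv (by simp)).continuousOn)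
    · exact ((continuousOn_const.mul hUscont).mul hderivUscont).mul hφ.continuous.continuousOn
  -- integrability
  have hint : MeasureTheory.Integrable f' := by
    rw [← MeasureTheory.integrableOn_iff_integrable_of_support_subset hsupp]
    exact (hf'cont.mono hφs).integrableOn_compact hφc
  -- tendsto 0 at top
  have htend : Tendsto f atTop (nhds 0) := by
    have hbdd : BddAbove (tsupport φ) := hφc.isCompact.bddAbove
    obtain ⟨R, hR⟩ := hbdd
    have : ∀ᶠ x in atTop, f x = 0 := by
      filter_upwards [eventually_gt_atTop R] with x hx
      have : x ∉ tsupport φ := fun hmem => absurd (hR hmem) (not_le.mpr hx)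
      simp [hf, image_eq_zero_of_notMem_tsupport this]
    exact Tendsto.congr' (this.mono fun x h => h.symm) tendsto_const_nhds
  have hcont : ContinuousWithinAt f (Set.Ici a) a := by
    have : ContinuousAt f a := by
      have hUa : ContinuousAt Us a := hUscont.continuousAt (hopen.mem_nhds ha)
      exact ((hUa.pow 2).mul hφ.continuous.continuousAt)
    exact this.continuousWithinAt
  have := MeasureTheory.integral_Ioi_of_hasDerivAt_of_tendsto hcont hderiv
    hint.integrableOn htend
  rw [this]
  simp [hf, hUsa]
end
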